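/- arXiv:2403.13911 — 5 statements merged into one kernel-verified Lean document; each statement's English description precedes it below -/
import Mathlib

section
/- For every truncation radius L > 0 and every nonzero wavevector k ∈ ℝ³, the Fourier transform of the truncated Coulomb kernel satisfies ∫_{x ∈ ℝ³, ‖x‖ < L} (1/(4π‖x‖)) · exp(−i⟨k,x⟩) dx = 2 (sin(L‖k‖/2) / ‖k‖)². In particular this integral is a real number and the Fourier transform of the truncated kernel is a smooth (non-singular) function of k. -/
open scoped InnerProductSpace Real
open MeasureTheory

noncomputable section

namespace TCF

def Q (w : Fin 2 → ℝ) : ℝ := ∑ j, w j ^ 2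

lemma Q_nonneg (w : Fin 2 → ℝ) : 0 ≤ Q w := Finset.sum_nonneg fun _ _ => sq_nonneg _

lemma continuous_Q : Continuous Q :=
  continuous_finset_sum _ fun j _ => (continuous_apply j).pow 2

lemma ftc2 (t : ℝ) (ht : t ≠ 0) (R : ℝ) (hR : 0 ≤ R) :
    ∫ r in (0:ℝ)..R, r * (4 * π * Real.sqrt (t^2 + r^2))⁻¹
      = (Real.sqrt (t^2 + R^2) - |t|) / (4 * π) := by
  have hpos : ∀ r : ℝ, 0 < t^2 + r^2 := fun r =>
    add_pos_of_pos_of_nonneg (by positivity) (sq_nonneg r)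
  have hder : ∀ r ∈ Set.uIcc (0:ℝ) R,
      HasDerivAt (fun r => Real.sqrt (t^2 + r^2) / (4 * π))
        (r * (4 * π * Real.sqrt (t^2 + r^2))⁻¹) r := by
    intro r _
    have h1 : HasDerivAt (fun r : ℝ => t^2 + r^2) (2 * r) r := by
      simpa using ((hasDerivAt_pow 2 r).const_add (t^2))
    have h2 := h1.sqrt (hpos r).ne'
    have h3 := h2.div_const (4 * π)
    refine h3.congr_deriv ?_
    have hs : Real.sqrt (t^2 + r^2) ≠ 0 := by positivity
    field_simp
  have hint : IntervalIntegrable (fun r => r * (4 * π * Real.sqrt (t^2 + r^2))⁻¹)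
      volume 0 R := by
    apply Continuous.intervalIntegrable
    apply continuous_id'.mul
    apply Continuous.inv₀
    · exact (continuous_const.mul ((continuous_const.add (continuous_pow 2)).sqrt))
    · intro r
      have : 0 < Real.sqrt (t^2 + r^2) := Real.sqrt_pos.2 (hpos r)
      positivity
  rw [intervalIntegral.integral_eq_sub_of_hasDerivAt hder hint]
  rw [show t^2 + 0^2 = t^2 by ring, Real.sqrt_sq_eq_abs]
  ring

lemma ftc1 {c : ℝ} (hc : c ≠ 0) (L : ℝ) :
    ∫ t in (0:ℝ)..L, (L - t) * Real.cos (c * t) = (1 - Real.cos (c * L)) / c^2 := by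
  have hder : ∀ t ∈ Set.uIcc (0:ℝ) L,
      HasDerivAt (fun t => (L - t) * Real.sin (c * t) / c - Real.cos (c * t) / c^2)
        ((L - t) * Real.cos (c * t)) t := by
    intro t _
    have hs : HasDerivAt (fun t : ℝ => Real.sin (c * t)) (Real.cos (c * t) * c) t := by
      simpa [mul_comm, Function.comp_def] using (Real.hasDerivAt_sin (c * t)).comp t
        ((hasDerivAt_id t).const_mul c)
    have hcc : HasDerivAt (fun t : ℝ => Real.cos (c * t)) (-Real.sin (c * t) * c) t := by
      simpa [mul_comm, Function.comp_def] using (Real.hasDerivAt_cos (c * t)).comp t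
        ((hasDerivAt_id t).const_mul c)
    have h1 : HasDerivAt (fun t : ℝ => (L - t) * Real.sin (c * t))
        ((-1) * Real.sin (c * t) + (L - t) * (Real.cos (c * t) * c)) t :=
      ((hasDerivAt_id t).const_sub L).mul hs
    have := ((h1.div_const c).sub (hcc.div_const (c^2)))
    refine this.congr_deriv ?_
    field_simp
    ring
  have hint : IntervalIntegrable (fun t => (L - t) * Real.cos (c * t)) volume 0 L :=
    (Continuous.mul (by continuity) (by continuity)).intervalIntegrable _ _
  rw [intervalIntegral.integral_eq_sub_of_hasDerivAt hder hint]
  simp [Real.sin_zero, Real.cos_zero]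
  field_simp
  ring

lemma trig (c L : ℝ) : (1 - Real.cos (c * L)) = 2 * Real.sin (c * L / 2) ^ 2 := by
  have h := Real.sin_sq_eq_half_sub (c * L / 2)
  rw [show 2 * (c * L / 2) = c * L by ring] at h
  nlinarith


lemma slice_radial (L : ℝ) (hL : 0 < L) {t : ℝ} (ht : t ≠ 0) :
    (∫ r in Set.Ioi (0:ℝ), r ^ 1 •
        Set.indicator {r : ℝ | t^2 + r^2 < L^2} (fun r => (4*π*Real.sqrt (t^2+r^2))⁻¹) r)
      = Set.indicator (Set.Ioo (-L) L) (fun s => (L - |s|)/(4*π)) t := by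
  by_cases htL : |t| < L
  · set R : ℝ := Real.sqrt (L^2 - t^2) with hRdef
    have ht2 : t^2 < L^2 := by
      have := sq_lt_sq' (neg_lt_of_abs_lt htL) (lt_of_abs_lt htL)
      simpa using this
    have hR2 : R^2 = L^2 - t^2 := Real.sq_sqrt (by linarith)
    have hRpos : 0 < R := Real.sqrt_pos.2 (by linarith)
    have hcong : ∀ r ∈ Set.Ioi (0:ℝ),
        r ^ 1 • Set.indicator {r : ℝ | t^2 + r^2 < L^2}
            (fun r => (4*π*Real.sqrt (t^2+r^2))⁻¹) r
        = Set.indicator (Set.Ioo (0:ℝ) R) (fun r => r * (4*π*Real.sqrt (t^2+r^2))⁻¹) r := by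
      intro r hr
      have hr0 : 0 < r := hr
      have hmem : (t^2 + r^2 < L^2) ↔ (r ∈ Set.Ioo (0:ℝ) R) := by
        constructor
        · intro h
          refine ⟨hr0, ?_⟩
          have : r^2 < R^2 := by rw [hR2]; linarith
          exact lt_of_pow_lt_pow_left₀ 2 hRpos.le this
        · rintro ⟨-, hrR⟩
          have : r^2 < R^2 := by
            have := pow_lt_pow_left₀ hrR hr0.le (n := 2) (by norm_num)
            simpa using this
          rw [hR2] at this; linarith
      by_cases h : t^2 + r^2 < L^2
      · rw [Set.indicator_of_mem (show r ∈ {r : ℝ | t^2 + r^2 < L^2} from h),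
          Set.indicator_of_mem (hmem.1 h)]
        rw [smul_eq_mul]; ring
      · rw [Set.indicator_of_notMem (show r ∉ {r : ℝ | t^2 + r^2 < L^2} from h),
          Set.indicator_of_notMem (fun hh => h (hmem.2 hh))]
        simp
    rw [setIntegral_congr_fun measurableSet_Ioi hcong,
      setIntegral_indicator measurableSet_Ioo,
      Set.inter_eq_self_of_subset_right Set.Ioo_subset_Ioi_self,
      ← MeasureTheory.integral_Ioc_eq_integral_Ioo,
      ← intervalIntegral.integral_of_le hRpos.le,
      ftc2 t ht R hRpos.le]
    rw [Set.indicator_of_mem (by exact abs_lt.1 htL : t ∈ Set.Ioo (-L) L)]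
    rw [hR2, show t^2 + (L^2 - t^2) = L^2 by ring, Real.sqrt_sq hL.le]
  · have hempty : ∀ r : ℝ, r ^ 1 • Set.indicator {r : ℝ | t^2 + r^2 < L^2}
        (fun r => (4*π*Real.sqrt (t^2+r^2))⁻¹) r = 0 := by
      intro r
      have : ¬ (t^2 + r^2 < L^2) := by
        push_neg
        have h1 : L^2 ≤ t^2 := by
          have := (abs_nonneg t)
          nlinarith [le_of_not_gt htL, abs_nonneg t, sq_abs t, sq_nonneg r]
        nlinarith [sq_nonneg r]
      rw [Set.indicator_of_notMem (show r ∉ {r : ℝ | t^2 + r^2 < L^2} from this)]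
      simp
    simp only [hempty, integral_zero]
    rw [Set.indicator_of_notMem]
    intro hmem
    exact htL (abs_lt.2 ⟨hmem.1, hmem.2⟩)


lemma vol_ball_E2 : (volume (Metric.ball (0 : EuclideanSpace ℝ (Fin 2)) 1)).toReal = π := by
  rw [EuclideanSpace.volume_ball]
  simp only [Fintype.card_fin]
  rw [show ((2:ℕ):ℝ)/2 + 1 = 2 by norm_num, Real.Gamma_two]
  rw [ENNReal.ofReal_one, one_pow, one_mul]
  rw [ENNReal.toReal_ofReal (by positivity)]
  rw [Real.sq_sqrt Real.pi_pos.le]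
  simp

lemma slice_val (L : ℝ) (hL : 0 < L) {t : ℝ} (ht : t ≠ 0) :
    (∫ w : Fin 2 → ℝ, Set.indicator {w : Fin 2 → ℝ | t^2 + Q w < L^2}
        (fun w => (4*π*Real.sqrt (t^2 + Q w))⁻¹) w)
      = Set.indicator (Set.Ioo (-L) L) (fun s => (L - |s|)/2) t := by
  set F : (Fin 2 → ℝ) → ℝ := fun w => Set.indicator {w : Fin 2 → ℝ | t^2 + Q w < L^2}
        (fun w => (4*π*Real.sqrt (t^2 + Q w))⁻¹) w with hF
  set f : ℝ → ℝ := fun r => Set.indicator {r : ℝ | t^2 + r^2 < L^2}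
        (fun r => (4*π*Real.sqrt (t^2 + r^2))⁻¹) r with hf
  have key := MeasurePreserving.integral_comp'
    (EuclideanSpace.volume_preserving_symm_measurableEquiv_toLp (Fin 2)) F
  rw [← key]
  have hQz : ∀ z : EuclideanSpace ℝ (Fin 2),
      Q ((MeasurableEquiv.toLp 2 (Fin 2 → ℝ)).symm z) = ‖z‖^2 := by
    intro z
    rw [EuclideanSpace.norm_eq, Real.sq_sqrt (Finset.sum_nonneg fun _ _ => sq_nonneg _)]
    simp [Q, Real.norm_eq_abs, sq_abs]
  have hFz : ∀ z : EuclideanSpace ℝ (Fin 2),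
      F ((MeasurableEquiv.toLp 2 (Fin 2 → ℝ)).symm z) = f ‖z‖ := by
    intro z
    simp only [hF, hf, Set.indicator_apply, Set.mem_setOf_eq, hQz z]
  rw [integral_congr_ae (Filter.Eventually.of_forall hFz)]
  rw [MeasureTheory.integral_fun_norm_addHaar volume f]
  rw [finrank_euclideanSpace_fin, measureReal_def, vol_ball_E2]
  rw [slice_radial L hL ht]
  by_cases hmem : t ∈ Set.Ioo (-L) L
  · rw [Set.indicator_of_mem hmem, Set.indicator_of_mem hmem]
    rw [nsmul_eq_mul, smul_eq_mul]
    field_simp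
    ring
  · rw [Set.indicator_of_notMem hmem, Set.indicator_of_notMem hmem]
    simp


lemma measurable_inner_fun (t : ℝ) :
    Measurable (fun w : Fin 2 → ℝ => (4*π*Real.sqrt (t^2 + Q w))⁻¹) :=
  ((continuous_const.mul ((continuous_const.add continuous_Q).sqrt)).measurable).inv

lemma measurableSet_sliceSet (L t : ℝ) :
    MeasurableSet {w : Fin 2 → ℝ | t^2 + Q w < L^2} :=
  measurableSet_lt ((measurable_const.add continuous_Q.measurable)) measurable_const

lemma finite_QltSet (L : ℝ) : volume {w : Fin 2 → ℝ | Q w < L^2} < ⊤ := by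
  refine lt_of_le_of_lt (measure_mono ?_) (measure_closedBall_lt_top
    (x := (0 : Fin 2 → ℝ)) (r := |L|))
  intro w hw
  simp only [Set.mem_setOf_eq] at hw
  rw [Metric.mem_closedBall, dist_zero_right]
  refine (pi_norm_le_iff_of_nonneg (abs_nonneg L)).2 fun i => ?_
  have hle : w i ^ 2 ≤ Q w := Finset.single_le_sum (f := fun j => w j ^ 2)
    (fun j _ => sq_nonneg _) (Finset.mem_univ i)
  have : w i ^ 2 < L ^ 2 := lt_of_le_of_lt hle hw
  rw [Real.norm_eq_abs]
  nlinarith [abs_nonneg (w i), abs_nonneg L, sq_abs (w i), sq_abs L]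

lemma slice_integrable (L : ℝ) {t : ℝ} (ht : t ≠ 0) :
    Integrable (fun w : Fin 2 → ℝ => Set.indicator {w : Fin 2 → ℝ | t^2 + Q w < L^2}
      (fun w => (4*π*Real.sqrt (t^2 + Q w))⁻¹) w) := by
  have hbound : Integrable (fun w : Fin 2 → ℝ =>
      Set.indicator {w : Fin 2 → ℝ | Q w < L^2} (fun _ => (4*π*|t|)⁻¹) w) := by
    rw [integrable_indicator_iff (measurableSet_lt continuous_Q.measurable measurable_const)]
    exact integrableOn_const (finite_QltSet L).ne
  refine Integrable.mono' hbound
    (((measurable_inner_fun t).indicator (measurableSet_sliceSet L t)).aestronglyMeasurable) ?_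
  refine Filter.Eventually.of_forall fun w => ?_
  by_cases hw : w ∈ {w : Fin 2 → ℝ | t^2 + Q w < L^2}
  · rw [Set.indicator_of_mem hw]
    have hw' : w ∈ {w : Fin 2 → ℝ | Q w < L^2} := by
      have := hw
      simp only [Set.mem_setOf_eq] at this ⊢
      nlinarith [sq_nonneg t]
    rw [Set.indicator_of_mem hw']
    have h1 : |t| ≤ Real.sqrt (t^2 + Q w) := by
      rw [← Real.sqrt_sq_eq_abs]
      exact Real.sqrt_le_sqrt (by nlinarith [Q_nonneg w])
    have habs : 0 < |t| := abs_pos.2 ht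
    rw [Real.norm_eq_abs, abs_of_nonneg (by positivity)]
    apply inv_anti₀ (by positivity)
    have : (0:ℝ) < 4*π := by positivity
    nlinarith [Real.pi_pos]
  · rw [Set.indicator_of_notMem hw]
    simp only [norm_zero]
    exact Set.indicator_nonneg (fun _ _ => by positivity) w


lemma exists_onb (k : EuclideanSpace ℝ (Fin 3)) (hk : k ≠ 0) :
    ∃ b : OrthonormalBasis (Fin 3) ℝ (EuclideanSpace ℝ (Fin 3)), b 0 = ‖k‖⁻¹ • k := by
  have hc : 0 < ‖k‖ := norm_pos_iff.2 hk
  have card : Module.finrank ℝ (EuclideanSpace ℝ (Fin 3)) = Fintype.card (Fin 3) := by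
    simp [finrank_euclideanSpace_fin]
  have horth : Orthonormal ℝ (Set.restrict {0} (fun _ : Fin 3 => ‖k‖⁻¹ • k)) := by
    rw [orthonormal_iff_ite]
    rintro ⟨i, hi⟩ ⟨j, hj⟩
    simp only [Set.mem_singleton_iff] at hi hj
    subst hi; subst hj
    simp only [Set.restrict_apply, if_pos rfl]
    show ⟪‖k‖⁻¹ • k, ‖k‖⁻¹ • k⟫_ℝ = if True then 1 else 0
    rw [if_pos trivial]
    rw [real_inner_smul_left, real_inner_smul_right, real_inner_self_eq_norm_sq]
    field_simp
  obtain ⟨b, hb0⟩ := horth.exists_orthonormalBasis_extension_of_card_eq card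
  exact ⟨b, hb0 0 rfl⟩

lemma inner_eq (k : EuclideanSpace ℝ (Fin 3)) (hk : k ≠ 0)
    (b : OrthonormalBasis (Fin 3) ℝ (EuclideanSpace ℝ (Fin 3))) (hb : b 0 = ‖k‖⁻¹ • k)
    (x : EuclideanSpace ℝ (Fin 3)) :
    ⟪k, x⟫_ℝ = ‖k‖ * b.repr x 0 := by
  have hc : (0:ℝ) < ‖k‖ := norm_pos_iff.2 hk
  have hk' : k = ‖k‖ • b 0 := by
    rw [hb, smul_smul, mul_inv_cancel₀ hc.ne', one_smul]
  conv_lhs => rw [hk']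
  rw [real_inner_smul_left, b.repr_apply_apply]


lemma exp_add_exp (x : ℝ) :
    Complex.exp (-Complex.I * x) + Complex.exp (Complex.I * x) = 2 * Real.cos x := by
  rw [Complex.ofReal_cos, Complex.cos]
  ring_nf

lemma final1d (L : ℝ) (hL : 0 < L) {c : ℝ} (hc : 0 < c) :
    (∫ t : ℝ, ((Set.indicator (Set.Ioo (-L) L) (fun s => (L - |s|)/2) t : ℝ) : ℂ)
      * Complex.exp (-Complex.I * ((c * t : ℝ) : ℂ)))
    = ((2 * (Real.sin (L * c / 2) / c) ^ 2 : ℝ) : ℂ) := by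
  set F : ℝ → ℂ := fun t => (((L - |t|)/2 : ℝ) : ℂ) * Complex.exp (-Complex.I * ((c * t : ℝ) : ℂ))
    with hFdef
  have hpull : (fun t : ℝ => ((Set.indicator (Set.Ioo (-L) L) (fun s => (L - |s|)/2) t : ℝ) : ℂ)
      * Complex.exp (-Complex.I * ((c * t : ℝ) : ℂ)))
      = Set.indicator (Set.Ioo (-L) L) F := by
    funext t
    by_cases h : t ∈ Set.Ioo (-L) L
    · rw [Set.indicator_of_mem h, Set.indicator_of_mem h]
    · rw [Set.indicator_of_notMem h, Set.indicator_of_notMem h]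
      simp
  rw [hpull, integral_indicator measurableSet_Ioo, ← integral_Ioc_eq_integral_Ioo,
    ← intervalIntegral.integral_of_le (by linarith : -L ≤ L)]
  have hcont : Continuous F := by
    apply Continuous.mul
    · exact Complex.continuous_ofReal.comp ((continuous_const.sub continuous_abs).div_const 2)
    · exact Complex.continuous_exp.comp
        (continuous_const.mul (Complex.continuous_ofReal.comp (continuous_const.mul continuous_id)))
  have h1 : IntervalIntegrable F volume (-L) 0 := hcont.intervalIntegrable _ _
  have h2 : IntervalIntegrable F volume 0 L := hcont.intervalIntegrable _ _
  rw [← intervalIntegral.integral_add_adjacent_intervals h1 h2]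
  have hneg : (∫ t in (-L)..(0:ℝ), F t) = ∫ t in (0:ℝ)..L, F (-t) := by
    rw [intervalIntegral.integral_comp_neg F]
    norm_num
  have h3 : IntervalIntegrable (fun t => F (-t)) volume 0 L :=
    (hcont.comp continuous_neg).intervalIntegrable _ _
  rw [hneg, ← intervalIntegral.integral_add h3 h2]
  have hcong : ∀ t ∈ Set.uIcc (0:ℝ) L,
      F (-t) + F t = (((L - t) * Real.cos (c * t) : ℝ) : ℂ) := by
    intro t htmem
    rw [Set.uIcc_of_le hL.le] at htmem
    have habs : |(-t : ℝ)| = |t| := abs_neg t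
    have habs2 : |t| = t := abs_of_nonneg htmem.1
    simp only [hFdef, habs, habs2]
    have harg : (-Complex.I) * ((c * (-t) : ℝ) : ℂ) = Complex.I * ((c * t : ℝ) : ℂ) := by
      push_cast; ring
    rw [harg, ← mul_add, add_comm, exp_add_exp (c*t)]
    push_cast
    ring
  rw [intervalIntegral.integral_congr hcong, intervalIntegral.integral_ofReal,
    ftc1 hc.ne' L, trig c L]
  norm_cast
  rw [mul_comm c L]
  field_simp

end TCF

/-- **Fourier transform of the truncated 3D Coulomb kernel.**
For every truncation radius `L > 0` and every nonzero wavevector `k ∈ ℝ³`,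
`∫_{‖x‖ < L} (1/(4π‖x‖)) · exp(−i⟨k,x⟩) dx = 2 (sin(L‖k‖/2)/‖k‖)²`.
In particular the integral is real. -/
theorem truncated_coulomb_fourier
    (L : ℝ) (hL : 0 < L) (k : EuclideanSpace ℝ (Fin 3)) (hk : k ≠ 0) :
    ∫ x in Metric.ball (0 : EuclideanSpace ℝ (Fin 3)) L,
      (1 / (4 * (π : ℂ) * (‖x‖ : ℂ))) * Complex.exp (-Complex.I * (⟪k, x⟫_ℝ : ℂ)) =
    ((2 * (Real.sin (L * ‖k‖ / 2) / ‖k‖) ^ 2 : ℝ) : ℂ) := by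
  have hc : (0:ℝ) < ‖k‖ := norm_pos_iff.2 hk
  set c : ℝ := ‖k‖ with hcdef
  obtain ⟨b, hb0⟩ := TCF.exists_onb k hk
  set f0 : EuclideanSpace ℝ (Fin 3) → ℂ :=
    Set.indicator (Metric.ball (0 : EuclideanSpace ℝ (Fin 3)) L)
      (fun x => (1 / (4 * (π : ℂ) * (‖x‖ : ℂ))) * Complex.exp (-Complex.I * (⟪k, x⟫_ℝ : ℂ)))
    with hf0
  set f1 : EuclideanSpace ℝ (Fin 3) → ℂ :=
    Set.indicator {y : EuclideanSpace ℝ (Fin 3) | ‖y‖ < L}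
      (fun y => (((4*π*‖y‖)⁻¹ : ℝ) : ℂ) * Complex.exp (-Complex.I * ((c * y 0 : ℝ) : ℂ)))
    with hf1
  set f2 : (Fin 3 → ℝ) → ℂ :=
    Set.indicator {v : Fin 3 → ℝ | ∑ i, v i ^ 2 < L^2}
      (fun v => (((4*π*Real.sqrt (∑ i, v i ^ 2))⁻¹ : ℝ) : ℂ)
        * Complex.exp (-Complex.I * ((c * v 0 : ℝ) : ℂ))) with hf2
  set G : ℝ × (Fin 2 → ℝ) → ℂ :=
    Set.indicator {p : ℝ × (Fin 2 → ℝ) | p.1^2 + TCF.Q p.2 < L^2}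
      (fun p => (((4*π*Real.sqrt (p.1^2 + TCF.Q p.2))⁻¹ : ℝ) : ℂ)
        * Complex.exp (-Complex.I * ((c * p.1 : ℝ) : ℂ))) with hG
  set g : ℝ → (Fin 2 → ℝ) → ℝ := fun t => fun w => Set.indicator
      {w : Fin 2 → ℝ | t^2 + TCF.Q w < L^2} (fun w => (4*π*Real.sqrt (t^2 + TCF.Q w))⁻¹) w
    with hg
  set A : ℝ → ℝ := Set.indicator (Set.Ioo (-L) L) (fun s => (L - |s|)/2) with hA
  -- pointwise identities
  have p1 : ∀ y : EuclideanSpace ℝ (Fin 3), f0 (b.measurableEquiv.symm y) = f1 y := by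
    intro y
    have hxy : b.measurableEquiv.symm y = b.repr.symm y := rfl
    have hnorm : ‖b.repr.symm y‖ = ‖y‖ := b.repr.symm.norm_map y
    have hinner : ⟪k, b.repr.symm y⟫_ℝ = c * y 0 := by
      rw [TCF.inner_eq k hk b hb0, b.repr.apply_symm_apply]
    have hmem : b.repr.symm y ∈ Metric.ball (0 : EuclideanSpace ℝ (Fin 3)) L ↔ ‖y‖ < L := by
      rw [mem_ball_zero_iff, hnorm]
    rw [hf0, hf1, hxy]
    by_cases h : ‖y‖ < L
    · rw [Set.indicator_of_mem (hmem.2 h), Set.indicator_of_mem (show y ∈ {y | ‖y‖ < L} from h)]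
      rw [hnorm, hinner]
      push_cast
      rw [one_div]
    · rw [Set.indicator_of_notMem (fun hh => h (hmem.1 hh)),
        Set.indicator_of_notMem (show y ∉ {y | ‖y‖ < L} from h)]
  have p2 : ∀ v : Fin 3 → ℝ, f1 ((MeasurableEquiv.toLp 2 (Fin 3 → ℝ)).symm.symm v) = f2 v := by
    intro v
    have hcoord : ∀ i, ((MeasurableEquiv.toLp 2 (Fin 3 → ℝ)).symm.symm v) i = v i := fun i => rfl
    have hnorm : ‖(MeasurableEquiv.toLp 2 (Fin 3 → ℝ)).symm.symm v‖
        = Real.sqrt (∑ i, v i ^ 2) := by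
      rw [EuclideanSpace.norm_eq]
      congr 1
      refine Finset.sum_congr rfl fun i _ => ?_
      rw [hcoord, Real.norm_eq_abs, sq_abs]
    have hmem : ‖(MeasurableEquiv.toLp 2 (Fin 3 → ℝ)).symm.symm v‖ < L ↔ ∑ i, v i ^ 2 < L^2 := by
      rw [hnorm, Real.sqrt_lt' hL]
    rw [hf1, hf2]
    by_cases h : ∑ i, v i ^ 2 < L^2
    · rw [Set.indicator_of_mem (show _ ∈ {y : EuclideanSpace ℝ (Fin 3) | ‖y‖ < L} from hmem.2 h),
        Set.indicator_of_mem (show v ∈ {v : Fin 3 → ℝ | ∑ i, v i ^ 2 < L^2} from h)]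
      rw [hnorm, hcoord]
    · rw [Set.indicator_of_notMem (show (MeasurableEquiv.toLp 2 (Fin 3 → ℝ)).symm.symm v ∉
          {y : EuclideanSpace ℝ (Fin 3) | ‖y‖ < L} from fun hh => h (hmem.1 hh)),
        Set.indicator_of_notMem (show v ∉ {v : Fin 3 → ℝ | ∑ i, v i ^ 2 < L^2} from h)]
  have p3 : ∀ p : ℝ × (Fin 2 → ℝ),
      f2 ((MeasurableEquiv.piFinSuccAbove (fun _ : Fin 3 => ℝ) 0).symm p) = G p := by
    intro p
    have hins : (MeasurableEquiv.piFinSuccAbove (fun _ : Fin 3 => ℝ) 0).symm p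
        = Fin.insertNth 0 p.1 p.2 := rfl
    have h1 : Fin.insertNth (0 : Fin 3) p.1 p.2 = (Fin.cons p.1 p.2 : Fin 3 → ℝ) := by
      simp [Fin.insertNth_zero]
    have hsum : ∑ i, (Fin.insertNth (0 : Fin 3) p.1 p.2) i ^ 2 = p.1^2 + TCF.Q p.2 := by
      simp only [h1]
      rw [Fin.sum_univ_succ]
      simp only [Fin.cons_zero, Fin.cons_succ, TCF.Q]
    rw [hf2, hG, hins]
    by_cases h : p.1^2 + TCF.Q p.2 < L^2
    · rw [Set.indicator_of_mem (show _ ∈ {v : Fin 3 → ℝ | ∑ i, v i ^ 2 < L^2} by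
          simp only [Set.mem_setOf_eq, hsum]; exact h),
        Set.indicator_of_mem (show p ∈ {p : ℝ × (Fin 2 → ℝ) | p.1^2 + TCF.Q p.2 < L^2} from h)]
      rw [hsum, h1, Fin.cons_zero]
    · rw [Set.indicator_of_notMem (show _ ∉ {v : Fin 3 → ℝ | ∑ i, v i ^ 2 < L^2} by
          simp only [Set.mem_setOf_eq, hsum]; exact h),
        Set.indicator_of_notMem
          (show p ∉ {p : ℝ × (Fin 2 → ℝ) | p.1^2 + TCF.Q p.2 < L^2} from h)]
  -- slice identity
  have hGslice : ∀ (t : ℝ) (w : Fin 2 → ℝ),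
      G (t, w) = ((g t w : ℝ) : ℂ) * Complex.exp (-Complex.I * ((c * t : ℝ) : ℂ)) := by
    intro t w
    simp only [hG, hg]
    by_cases h : t^2 + TCF.Q w < L^2
    · rw [Set.indicator_of_mem (show (t,w) ∈ {p : ℝ × (Fin 2 → ℝ) | p.1^2 + TCF.Q p.2 < L^2}
          from h), Set.indicator_of_mem (show w ∈ {w : Fin 2 → ℝ | t^2 + TCF.Q w < L^2} from h)]
    · rw [Set.indicator_of_notMem (show (t,w) ∉ {p : ℝ × (Fin 2 → ℝ) | p.1^2 + TCF.Q p.2 < L^2}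
          from h), Set.indicator_of_notMem
          (show w ∉ {w : Fin 2 → ℝ | t^2 + TCF.Q w < L^2} from h)]
      simp
  have hnormexp : ∀ x : ℝ, ‖Complex.exp (-Complex.I * (x : ℂ))‖ = 1 := by
    intro x
    rw [Complex.norm_exp]
    simp
  have hgnonneg : ∀ t w, 0 ≤ g t w := fun t w =>
    Set.indicator_nonneg (fun w _ => by positivity) w
  -- measurability of G
  have hcontsq : Continuous fun p : ℝ × (Fin 2 → ℝ) => p.1^2 + TCF.Q p.2 :=
    (continuous_fst.pow 2).add (TCF.continuous_Q.comp continuous_snd)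
  have hS : MeasurableSet {p : ℝ × (Fin 2 → ℝ) | p.1^2 + TCF.Q p.2 < L^2} :=
    measurableSet_lt hcontsq.measurable measurable_const
  have hGmeas : AEStronglyMeasurable G (volume.prod volume) := by
    refine (Measurable.indicator ?_ hS).aestronglyMeasurable
    refine Measurable.mul ?_ ?_
    · exact Complex.measurable_ofReal.comp ((continuous_const.mul hcontsq.sqrt).measurable).inv
    · exact (Complex.continuous_exp.comp (continuous_const.mul
        (Complex.continuous_ofReal.comp (continuous_const.mul continuous_fst)))).measurable
  -- a.e. nonzero
  have h0ae : ∀ᵐ t : ℝ, t ≠ 0 := by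
    have : volume ({0} : Set ℝ) = 0 := measure_singleton 0
    refine (MeasureTheory.ae_iff).2 ?_
    simpa using this
  -- integrability of A
  have hAint : Integrable A := by
    rw [hA, integrable_indicator_iff measurableSet_Ioo]
    exact (((continuous_const.sub continuous_abs).div_const 2).continuousOn.integrableOn_compact
      isCompact_Icc).mono_set Set.Ioo_subset_Icc_self
  -- norms of G
  have hGnorm : ∀ t w, ‖G (t, w)‖ = g t w := by
    intro t w
    rw [hGslice, norm_mul, hnormexp, mul_one, Complex.norm_real, Real.norm_eq_abs,
      abs_of_nonneg (hgnonneg t w)]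
  -- integrability of G on the product
  have hGint : Integrable G (volume.prod volume) := by
    refine (integrable_prod_iff hGmeas).2 ⟨?_, ?_⟩
    · filter_upwards [h0ae] with t ht
      have : (fun w => G (t, w)) = fun w =>
          ((g t w : ℝ) : ℂ) * Complex.exp (-Complex.I * ((c * t : ℝ) : ℂ)) := by
        funext w; exact hGslice t w
      rw [this]
      exact ((TCF.slice_integrable L ht).ofReal).mul_const _
    · refine Integrable.congr hAint ?_
      filter_upwards [h0ae] with t ht
      have : (fun w => ‖G (t, w)‖) = g t := by funext w; exact hGnorm t w
      rw [this, TCF.slice_val L hL ht]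
  -- main computation
  calc
    ∫ x in Metric.ball (0 : EuclideanSpace ℝ (Fin 3)) L,
        (1 / (4 * (π : ℂ) * (‖x‖ : ℂ))) * Complex.exp (-Complex.I * (⟪k, x⟫_ℝ : ℂ))
      = ∫ x, f0 x := (integral_indicator measurableSet_ball).symm
    _ = ∫ y, f0 (b.measurableEquiv.symm y) :=
        (MeasurePreserving.integral_comp' b.measurePreserving_measurableEquiv.symm f0).symm
    _ = ∫ y, f1 y := integral_congr_ae (Filter.Eventually.of_forall p1)
    _ = ∫ v, f1 ((MeasurableEquiv.toLp 2 (Fin 3 → ℝ)).symm.symm v) :=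
        (MeasurePreserving.integral_comp'
          (EuclideanSpace.volume_preserving_symm_measurableEquiv_toLp (Fin 3)).symm f1).symm
    _ = ∫ v, f2 v := integral_congr_ae (Filter.Eventually.of_forall p2)
    _ = ∫ p, f2 ((MeasurableEquiv.piFinSuccAbove (fun _ : Fin 3 => ℝ) 0).symm p) :=
        (MeasurePreserving.integral_comp'
          ((volume_preserving_piFinSuccAbove (fun _ : Fin 3 => ℝ) 0).symm) f2).symm
    _ = ∫ p, G p := integral_congr_ae (Filter.Eventually.of_forall p3)
    _ = ∫ p, G p ∂(volume.prod volume) := by rw [← Measure.volume_eq_prod]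
    _ = ∫ t, ∫ w, G (t, w) := integral_prod G hGint
    _ = ∫ t, ((A t : ℝ) : ℂ) * Complex.exp (-Complex.I * ((c * t : ℝ) : ℂ)) := by
        refine integral_congr_ae ?_
        filter_upwards [h0ae] with t ht
        have : (fun w => G (t, w)) = fun w =>
            ((g t w : ℝ) : ℂ) * Complex.exp (-Complex.I * ((c * t : ℝ) : ℂ)) := by
          funext w; exact hGslice t w
        rw [this, integral_mul_const]
        congr 1
        rw [show (∫ a : Fin 2 → ℝ, ((g t a : ℝ) : ℂ)) = ((∫ a, g t a : ℝ) : ℂ) from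
          integral_ofReal]
        congr 1
        simp only [hg, hA]
        exact TCF.slice_val L hL ht
    _ = ((2 * (Real.sin (L * c / 2) / c) ^ 2 : ℝ) : ℂ) := TCF.final1d L hL hc
end
end

section
/- For every truncation radius L > 0 and every nonzero wavevector k ∈ ℝ², writing s = ‖k‖, the Fourier transform of the truncated two-dimensional logarithmic kernel satisfies ∫_{x ∈ ℝ², ‖x‖ < L} (−1/(2π)) log(‖x‖) · exp(−i⟨k,x⟩) dx = (1 − J₀(Ls))/s² − L·log(L)·J₁(Ls)/s, where J₀ and J₁ are the Bessel functions of the first kind of orders 0 and 1. -/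
open scoped InnerProductSpace Real
open MeasureTheory

/-- Bessel function of the first kind of order 0, via its integral representation
`J₀(z) = (1/π)∫₀^π cos(z sin θ) dθ`. -/
noncomputable def besselJ0 (z : ℝ) : ℝ :=
  (1 / π) * ∫ θ in (0:ℝ)..π, Real.cos (z * Real.sin θ)

/-- Bessel function of the first kind of order 1, via its integral representation
`J₁(z) = (1/π)∫₀^π cos(θ − z sin θ) dθ`. -/
noncomputable def besselJ1 (z : ℝ) : ℝ :=
  (1 / π) * ∫ θ in (0:ℝ)..π, Real.cos (θ - z * Real.sin θ)

lemma hasDerivAt_J0_int (z : ℝ) :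
    HasDerivAt (fun z => ∫ θ in (0:ℝ)..π, Real.cos (z * Real.sin θ))
      (∫ θ in (0:ℝ)..π, -(Real.sin θ * Real.sin (z * Real.sin θ))) z := by
  have := (intervalIntegral.hasDerivAt_integral_of_dominated_loc_of_deriv_le
      (F := fun z θ => Real.cos (z * Real.sin θ))
      (F' := fun z θ => -(Real.sin θ * Real.sin (z * Real.sin θ)))
      (bound := fun _ => 1) (a := (0:ℝ)) (b := π) (x₀ := z) (μ := volume)
      Filter.univ_mem ?_ ?_ ?_ ?_ ?_ ?_).2
  · exact this
  · filter_upwards with x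
    exact (Continuous.aestronglyMeasurable (by fun_prop)).restrict
  · exact (Continuous.intervalIntegrable (by fun_prop) _ _)
  · exact (Continuous.aestronglyMeasurable (by fun_prop)).restrict
  · filter_upwards with θ _ x _
    rw [norm_neg, norm_mul]
    exact mul_le_one₀ (abs_le.mpr ⟨Real.neg_one_le_sin θ, Real.sin_le_one θ⟩ : |Real.sin θ| ≤ 1)
      (norm_nonneg _) (abs_le.mpr ⟨Real.neg_one_le_sin _, Real.sin_le_one _⟩)
  · exact intervalIntegrable_const
  · filter_upwards with θ _ x _
    simpa [mul_comm] using ((hasDerivAt_id x).mul_const (Real.sin θ)).cos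

lemma hasDerivAt_J1_int (z : ℝ) :
    HasDerivAt (fun z => ∫ θ in (0:ℝ)..π, Real.cos (θ - z * Real.sin θ))
      (∫ θ in (0:ℝ)..π, Real.sin θ * Real.sin (θ - z * Real.sin θ)) z := by
  have := (intervalIntegral.hasDerivAt_integral_of_dominated_loc_of_deriv_le
      (F := fun z θ => Real.cos (θ - z * Real.sin θ))
      (F' := fun z θ => Real.sin θ * Real.sin (θ - z * Real.sin θ))
      (bound := fun _ => 1) (a := (0:ℝ)) (b := π) (x₀ := z) (μ := volume)
      Filter.univ_mem ?_ ?_ ?_ ?_ ?_ ?_).2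
  · exact this
  · filter_upwards with x
    exact (Continuous.aestronglyMeasurable (by fun_prop)).restrict
  · exact (Continuous.intervalIntegrable (by fun_prop) _ _)
  · exact (Continuous.aestronglyMeasurable (by fun_prop)).restrict
  · filter_upwards with θ _ x _
    rw [norm_mul]
    exact mul_le_one₀ (abs_le.mpr ⟨Real.neg_one_le_sin θ, Real.sin_le_one θ⟩ : |Real.sin θ| ≤ 1)
      (norm_nonneg _) (abs_le.mpr ⟨Real.neg_one_le_sin _, Real.sin_le_one _⟩)
  · exact intervalIntegrable_const
  · filter_upwards with θ _ x _
    have h : HasDerivAt (fun x : ℝ => θ - x * Real.sin θ) (-Real.sin θ) x := by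
      simpa using ((hasDerivAt_id x).mul_const (Real.sin θ)).const_sub θ
    simpa [mul_comm] using h.cos

/-- `∫₀^π cos θ cos (z sin θ) dθ = 0` for `z ≠ 0`. -/
lemma cos_cos_integral_zero {z : ℝ} (hz : z ≠ 0) :
    ∫ θ in (0:ℝ)..π, Real.cos θ * Real.cos (z * Real.sin θ) = 0 := by
  have h : ∀ θ ∈ Set.uIcc (0:ℝ) π, HasDerivAt (fun θ => Real.sin (z * Real.sin θ) / z)
      (Real.cos θ * Real.cos (z * Real.sin θ)) θ := by
    intro θ _
    have h1 : HasDerivAt (fun θ : ℝ => z * Real.sin θ) (z * Real.cos θ) θ :=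
      (Real.hasDerivAt_sin θ).const_mul z
    have := h1.sin.div_const z
    refine this.congr_deriv ?_
    rw [mul_div_assoc, mul_div_cancel_left₀ _ hz]
    ring
  rw [intervalIntegral.integral_eq_sub_of_hasDerivAt h
    (Continuous.intervalIntegrable (by fun_prop) _ _)]
  simp

/-- `J₀' = -J₁` for `z ≠ 0`. -/
lemma hasDerivAt_besselJ0 {z : ℝ} (hz : z ≠ 0) :
    HasDerivAt besselJ0 (-besselJ1 z) z := by
  have h := ((hasDerivAt_J0_int z).const_mul (1/π))
  have key : (1/π) * ∫ θ in (0:ℝ)..π, -(Real.sin θ * Real.sin (z * Real.sin θ))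
      = -besselJ1 z := by
    have e : ∀ θ : ℝ, -(Real.sin θ * Real.sin (z * Real.sin θ))
        = Real.cos θ * Real.cos (z * Real.sin θ) - Real.cos (θ - z * Real.sin θ) := by
      intro θ; rw [Real.cos_sub]; ring
    rw [intervalIntegral.integral_congr (g := fun θ => Real.cos θ * Real.cos (z * Real.sin θ)
        - Real.cos (θ - z * Real.sin θ)) (fun θ _ => e θ),
      intervalIntegral.integral_sub (Continuous.intervalIntegrable (by fun_prop) _ _)
        (Continuous.intervalIntegrable (by fun_prop) _ _),
      cos_cos_integral_zero hz, besselJ1]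
    ring
  rw [← key]
  exact h

/-- `(z J₁(z))' = z J₀(z)`. -/
lemma hasDerivAt_mul_besselJ1 (z : ℝ) :
    HasDerivAt (fun z => z * besselJ1 z) (z * besselJ0 z) z := by
  have hJ1 : HasDerivAt besselJ1 ((1/π) * ∫ θ in (0:ℝ)..π,
      Real.sin θ * Real.sin (θ - z * Real.sin θ)) z := (hasDerivAt_J1_int z).const_mul (1/π)
  have h := (hasDerivAt_id z).mul hJ1
  -- identity: ∫₀^π (1 - z cos θ) cos(θ - z sin θ) dθ = 0
  have hftc : ∫ θ in (0:ℝ)..π, (1 - z * Real.cos θ) * Real.cos (θ - z * Real.sin θ) = 0 := by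
    have hd : ∀ θ ∈ Set.uIcc (0:ℝ) π, HasDerivAt (fun θ => Real.sin (θ - z * Real.sin θ))
        ((1 - z * Real.cos θ) * Real.cos (θ - z * Real.sin θ)) θ := by
      intro θ _
      have h1 : HasDerivAt (fun θ : ℝ => θ - z * Real.sin θ) (1 - z * Real.cos θ) θ :=
        (hasDerivAt_id θ).sub ((Real.hasDerivAt_sin θ).const_mul z)
      simpa [mul_comm] using h1.sin
    rw [intervalIntegral.integral_eq_sub_of_hasDerivAt hd
      (Continuous.intervalIntegrable (by fun_prop) _ _)]
    simp
  -- pointwise: cos(θ-u) + z sinθ sin(θ-u) = (1 - z cosθ)cos(θ-u) + z cos(z sinθ)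
  have key : besselJ1 z + z * ((1/π) * ∫ θ in (0:ℝ)..π,
      Real.sin θ * Real.sin (θ - z * Real.sin θ)) = z * besselJ0 z := by
    have e : ∀ θ : ℝ, Real.cos (θ - z * Real.sin θ)
        + z * (Real.sin θ * Real.sin (θ - z * Real.sin θ))
        = (1 - z * Real.cos θ) * Real.cos (θ - z * Real.sin θ)
          + z * Real.cos (z * Real.sin θ) := by
      intro θ
      rw [Real.cos_sub, Real.sin_sub]
      linear_combination (z * Real.cos (z * Real.sin θ)) * (Real.sin_sq_add_cos_sq θ)
    have lhs_eq : besselJ1 z + z * ((1/π) * ∫ θ in (0:ℝ)..π,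
        Real.sin θ * Real.sin (θ - z * Real.sin θ))
        = (1/π) * ∫ θ in (0:ℝ)..π, (Real.cos (θ - z * Real.sin θ)
          + z * (Real.sin θ * Real.sin (θ - z * Real.sin θ))) := by
      rw [intervalIntegral.integral_add (Continuous.intervalIntegrable (by fun_prop) _ _)
        (Continuous.intervalIntegrable (by fun_prop) _ _),
        intervalIntegral.integral_const_mul, besselJ1]
      ring
    rw [lhs_eq, intervalIntegral.integral_congr (fun θ _ => e θ),
      intervalIntegral.integral_add (Continuous.intervalIntegrable (by fun_prop) _ _)
        (Continuous.intervalIntegrable (by fun_prop) _ _),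
      hftc, intervalIntegral.integral_const_mul, besselJ0]
    ring
  rw [← key]
  simpa only [one_mul, Pi.mul_def, id] using h

lemma continuous_besselJ0 : Continuous besselJ0 :=
  continuous_iff_continuousAt.mpr fun z => ((hasDerivAt_J0_int z).const_mul (1/π)).continuousAt

lemma continuous_besselJ1 : Continuous besselJ1 :=
  continuous_iff_continuousAt.mpr fun z => ((hasDerivAt_J1_int z).const_mul (1/π)).continuousAt

lemma besselJ0_zero : besselJ0 0 = 1 := by
  simp [besselJ0, Real.pi_ne_zero]

lemma radial_integral {s L : ℝ} (hs : 0 < s) (hL : 0 < L) :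
    ∫ r in (0:ℝ)..L, r * Real.log r * besselJ0 (s * r)
      = (Real.log L * (L * besselJ1 (s * L)) / s + besselJ0 (s * L) / s ^ 2) - 1 / s ^ 2 := by
  set f : ℝ → ℝ := fun r => Real.log r * (r * besselJ1 (s * r)) / s + besselJ0 (s * r) / s ^ 2
    with hf
  have hmul : ∀ r : ℝ, HasDerivAt (fun r => r * besselJ1 (s * r)) (s * r * besselJ0 (s * r)) r := by
    intro r
    have h1 : HasDerivAt (fun r : ℝ => s * r) s r := by simpa using (hasDerivAt_id r).const_mul s
    have h2 := (hasDerivAt_mul_besselJ1 (s * r)).comp r h1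
    have h3 := h2.const_mul (1/s)
    have h4 : HasDerivAt (fun r : ℝ => r * besselJ1 (s * r))
        (1 / s * (s * r * besselJ0 (s * r) * s)) r := by
      refine h3.congr_of_eventuallyEq (Filter.Eventually.of_forall fun x => ?_)
      simp only [Function.comp_apply]
      field_simp
    convert h4 using 1
    field_simp
  have hderiv : ∀ r ∈ Set.Ioo (0:ℝ) L,
      HasDerivAt f (r * Real.log r * besselJ0 (s * r)) r := by
    intro r hr
    have hr0 : 0 < r := hr.1
    have h1 : HasDerivAt (fun r : ℝ => s * r) s r := by simpa using (hasDerivAt_id r).const_mul s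
    have hA := ((Real.hasDerivAt_log hr0.ne').mul (hmul r)).div_const s
    have hB := ((hasDerivAt_besselJ0 (mul_pos hs hr0).ne').comp r h1).div_const (s ^ 2)
    have := hA.add hB
    refine this.congr_deriv ?_
    field_simp
    ring
  have hcontJ : Continuous fun r : ℝ => besselJ0 (s * r) :=
    continuous_besselJ0.comp (by fun_prop)
  have hrlog : Filter.Tendsto (fun r : ℝ => Real.log r * r) (nhdsWithin 0 (Set.Ioi 0)) (nhds 0) := by
    simpa using tendsto_log_mul_rpow_nhdsGT_zero one_pos
  have hint : IntervalIntegrable (fun r => r * Real.log r * besselJ0 (s * r)) volume 0 L := by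
    apply ContinuousOn.intervalIntegrable
    rw [Set.uIcc_of_le hL.le]
    intro x hx
    rcases eq_or_lt_of_le hx.1 with h0 | h0
    · -- continuity within at 0
      have hIcc : Set.Icc (0:ℝ) L = {0} ∪ Set.Ioc 0 L := by
        ext y; simp only [Set.mem_Icc, Set.mem_union, Set.mem_singleton_iff, Set.mem_Ioc]
        constructor
        · rintro ⟨h1, h2⟩; rcases eq_or_lt_of_le h1 with h | h
          · exact Or.inl h.symm
          · exact Or.inr ⟨h, h2⟩
        · rintro (rfl | ⟨h1, h2⟩); exact ⟨le_refl _, hL.le⟩; exact ⟨h1.le, h2⟩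
      subst h0
      rw [ContinuousWithinAt, hIcc, nhdsWithin_union, Filter.tendsto_sup]
      constructor
      · rw [nhdsWithin_singleton]
        simpa [Real.log_zero] using tendsto_pure_nhds
          (fun r : ℝ => r * Real.log r * besselJ0 (s * r)) 0
      · have ht : Filter.Tendsto (fun r : ℝ => r * Real.log r * besselJ0 (s * r))
            (nhdsWithin 0 (Set.Ioi 0)) (nhds 0) := by
          have := hrlog.mul ((hcontJ.tendsto 0).mono_left nhdsWithin_le_nhds)
          simp only [zero_mul] at this
          refine this.congr (fun r => by ring)
        simpa [Real.log_zero] using ht.mono_left (nhdsWithin_mono _ Set.Ioc_subset_Ioi_self)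
    · exact ((continuousAt_id.mul
        ((Real.continuousAt_log h0.ne').mul (hcontJ.continuousAt))).congr
          (by filter_upwards with y; simp only [Pi.mul_apply, id_eq]; ring)).continuousWithinAt
  have hfa : Filter.Tendsto f (nhdsWithin 0 (Set.Ioi 0)) (nhds (1 / s ^ 2)) := by
    have h1 : Filter.Tendsto (fun r : ℝ => Real.log r * (r * besselJ1 (s * r)) / s)
        (nhdsWithin 0 (Set.Ioi 0)) (nhds 0) := by
      have hcJ : Filter.Tendsto (fun r : ℝ => besselJ1 (s * r)) (nhdsWithin 0 (Set.Ioi 0))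
          (nhds (besselJ1 0)) := by
        have : Continuous fun r : ℝ => besselJ1 (s * r) := continuous_besselJ1.comp (by fun_prop)
        simpa using (this.tendsto 0).mono_left nhdsWithin_le_nhds
      have := (hrlog.mul hcJ).div_const s
      simp only [zero_mul, zero_div] at this
      refine this.congr (fun r => by ring_nf)
    have h2 : Filter.Tendsto (fun r : ℝ => besselJ0 (s * r) / s ^ 2)
        (nhdsWithin 0 (Set.Ioi 0)) (nhds (1 / s ^ 2)) := by
      have : Filter.Tendsto (fun r : ℝ => besselJ0 (s * r)) (nhdsWithin 0 (Set.Ioi 0))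
          (nhds 1) := by
        have h := (hcontJ.tendsto 0).mono_left (nhdsWithin_le_nhds (a := (0:ℝ)) (s := Set.Ioi 0))
        simpa [besselJ0_zero] using h
      exact this.div_const _
    simpa using h1.add h2
  have hfb : Filter.Tendsto f (nhdsWithin L (Set.Iio L)) (nhds (f L)) := by
    have : ContinuousAt f L := by
      apply ContinuousAt.add
      · exact (((Real.continuousAt_log hL.ne').mul
          (continuousAt_id.mul ((continuous_besselJ1.comp (by fun_prop)).continuousAt))).div_const s)
      · exact ((continuous_besselJ0.comp (show Continuous fun r : ℝ => s * r by fun_prop)).continuousAt).div_const _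
    exact this.continuousWithinAt
  have := intervalIntegral.integral_eq_sub_of_hasDerivAt_of_tendsto hL hderiv hint hfa hfb
  rw [this, hf]

lemma exp_neg_I_ofReal (c : ℝ) :
    Complex.exp (-Complex.I * (c : ℂ)) = ((Real.cos c : ℝ) : ℂ) - ((Real.sin c : ℝ) : ℂ) * Complex.I := by
  rw [show -Complex.I * (c : ℂ) = ((-c : ℝ) : ℂ) * Complex.I by push_cast; ring,
    Complex.exp_mul_I, ← Complex.ofReal_cos, ← Complex.ofReal_sin, Real.cos_neg, Real.sin_neg]
  push_cast
  ring

lemma sin_cos_integral_zero (z : ℝ) :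
    ∫ θ in (0:ℝ)..π, Real.sin (z * Real.cos θ) = 0 := by
  have h := intervalIntegral.integral_comp_sub_left (a := (0:ℝ)) (b := π)
    (fun x => Real.sin (z * Real.cos x)) π
  simp only [sub_zero, sub_self] at h
  have h2 : ∀ x : ℝ, Real.sin (z * Real.cos (π - x)) = -Real.sin (z * Real.cos x) := by
    intro x; rw [Real.cos_pi_sub]; rw [show z * -Real.cos x = -(z * Real.cos x) by ring,
      Real.sin_neg]
  rw [intervalIntegral.integral_congr (g := fun x => -Real.sin (z * Real.cos x))
    (fun x _ => h2 x)] at h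
  rw [intervalIntegral.integral_neg] at h
  linarith

lemma even_integral {f : ℝ → ℝ} (hf : ∀ x, f (-x) = f x) (a : ℝ)
    (hi : ∀ u v : ℝ, IntervalIntegrable f volume u v) :
    ∫ x in (-a)..a, f x = 2 * ∫ x in (0:ℝ)..a, f x := by
  have h := intervalIntegral.integral_comp_neg (a := (0:ℝ)) (b := a) f
  rw [intervalIntegral.integral_congr (g := f) (fun x _ => hf x), neg_zero] at h
  rw [← intervalIntegral.integral_add_adjacent_intervals (hi (-a) 0) (hi 0 a), ← h]
  ring

lemma cos_cos_eq_cos_sin (z : ℝ) :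
    ∫ θ in (0:ℝ)..π, Real.cos (z * Real.cos θ) = ∫ θ in (0:ℝ)..π, Real.cos (z * Real.sin θ) := by
  have hint : ∀ u v : ℝ, IntervalIntegrable (fun x => Real.cos (z * Real.sin x)) volume u v :=
    fun u v => Continuous.intervalIntegrable (by fun_prop) _ _
  -- LHS = ∫_{-π/2}^{π/2} cos (z sin x)
  have h1 : ∫ θ in (0:ℝ)..π, Real.cos (z * Real.cos θ)
      = ∫ x in (-(π/2))..(π/2), Real.cos (z * Real.sin x) := by
    have h := intervalIntegral.integral_comp_sub_left (a := (0:ℝ)) (b := π)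
      (fun x => Real.cos (z * Real.sin x)) (π/2)
    rw [intervalIntegral.integral_congr
      (g := fun θ : ℝ => Real.cos (z * Real.cos θ)) (fun θ _ => by
        rw [show π/2 - θ = -(θ - π/2) by ring, Real.sin_neg, Real.sin_sub_pi_div_two]
        rw [show z * - -Real.cos θ = z * Real.cos θ by ring])] at h
    rw [h]
    congr 1 <;> ring
  have h2 : ∫ x in (-(π/2))..(π/2), Real.cos (z * Real.sin x)
      = 2 * ∫ x in (0:ℝ)..(π/2), Real.cos (z * Real.sin x) := by
    apply even_integral (fun x => by rw [Real.sin_neg,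
      show z * -Real.sin x = -(z * Real.sin x) by ring, Real.cos_neg]) _ hint
  have h3 : ∫ θ in (0:ℝ)..π, Real.cos (z * Real.sin θ)
      = 2 * ∫ x in (0:ℝ)..(π/2), Real.cos (z * Real.sin x) := by
    have h := intervalIntegral.integral_comp_sub_left (a := (0:ℝ)) (b := π/2)
      (fun x => Real.cos (z * Real.sin x)) π
    simp only [sub_zero] at h
    rw [intervalIntegral.integral_congr
      (g := fun θ : ℝ => Real.cos (z * Real.sin θ)) (fun θ _ => by
        rw [Real.sin_pi_sub])] at h
    rw [show π - π/2 = π/2 by ring] at h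
    rw [← intervalIntegral.integral_add_adjacent_intervals (hint 0 (π/2)) (hint (π/2) π), ← h]
    ring
  rw [h1, h2, h3]

/-- The angular integral: `∫_{-π}^{π} e^{-i z cos(θ-φ)} dθ = 2π J₀(z)`. -/
lemma angular_integral (z φ : ℝ) :
    ∫ θ in (-π)..π, Complex.exp (-Complex.I * ((z * Real.cos (θ - φ) : ℝ) : ℂ))
      = ((2 * π * besselJ0 z : ℝ) : ℂ) := by
  have hper : Function.Periodic
      (fun θ => Complex.exp (-Complex.I * ((z * Real.cos θ : ℝ) : ℂ))) (2*π) := by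
    intro θ; simp [Real.cos_add_two_pi]
  have hshift : ∫ θ in (-π)..π, Complex.exp (-Complex.I * ((z * Real.cos (θ - φ) : ℝ) : ℂ))
      = ∫ θ in (-π)..π, Complex.exp (-Complex.I * ((z * Real.cos θ : ℝ) : ℂ)) := by
    rw [intervalIntegral.integral_comp_sub_right
      (fun θ => Complex.exp (-Complex.I * ((z * Real.cos θ : ℝ) : ℂ))) φ]
    have h := hper.intervalIntegral_add_eq (-π - φ) (-π)
    rw [show -π - φ + 2*π = π - φ by ring, show -π + 2*π = π by ring] at h
    exact h
  rw [hshift]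
  have hsplit : ∀ θ : ℝ, Complex.exp (-Complex.I * ((z * Real.cos θ : ℝ) : ℂ))
      = ((Real.cos (z * Real.cos θ) : ℝ) : ℂ)
        - ((Real.sin (z * Real.cos θ) : ℝ) : ℂ) * Complex.I :=
    fun θ => exp_neg_I_ofReal _
  rw [intervalIntegral.integral_congr (fun θ _ => hsplit θ)]
  rw [intervalIntegral.integral_sub (Continuous.intervalIntegrable (by fun_prop) _ _)
    (Continuous.intervalIntegrable (by fun_prop) _ _)]
  rw [intervalIntegral.integral_mul_const]
  rw [intervalIntegral.integral_ofReal, intervalIntegral.integral_ofReal]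
  have hev : ∀ x : ℝ, Real.sin (z * Real.cos (-x)) = Real.sin (z * Real.cos x) := by
    intro x; rw [Real.cos_neg]
  have hsin : ∫ θ in (-π)..π, Real.sin (z * Real.cos θ) = 0 := by
    rw [even_integral hev π (fun u v => Continuous.intervalIntegrable (by fun_prop) _ _),
      sin_cos_integral_zero]
    ring
  have hcosev : ∀ x : ℝ, Real.cos (z * Real.cos (-x)) = Real.cos (z * Real.cos x) := by
    intro x; rw [Real.cos_neg]
  have hcos : ∫ θ in (-π)..π, Real.cos (z * Real.cos θ) = 2 * π * besselJ0 z := by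
    rw [even_integral hcosev π (fun u v => Continuous.intervalIntegrable (by fun_prop) _ _),
      cos_cos_eq_cos_sin, besselJ0]
    field_simp
  rw [hsin, hcos]
  simp

/-- **Fourier transform of the truncated 2D logarithmic kernel.**
For every truncation radius `L > 0` and every nonzero wavevector `k ∈ ℝ²`, with `s = ‖k‖`,
`∫_{‖x‖ < L} (−1/(2π)) log ‖x‖ · exp(−i⟨k,x⟩) dx = (1 − J₀(Ls))/s² − L log(L) J₁(Ls)/s`. -/
theorem truncated_log_kernel_fourier
    (L : ℝ) (hL : 0 < L) (k : EuclideanSpace ℝ (Fin 2)) (hk : k ≠ 0) :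
    ∫ x in Metric.ball (0 : EuclideanSpace ℝ (Fin 2)) L,
      (((-1 / (2 * π)) * Real.log ‖x‖ : ℝ) : ℂ) * Complex.exp (-Complex.I * (⟪k, x⟫_ℝ : ℂ)) =
    (((1 - besselJ0 (L * ‖k‖)) / ‖k‖ ^ 2
        - L * Real.log L * besselJ1 (L * ‖k‖) / ‖k‖ : ℝ) : ℂ) := by
  have hs : (0:ℝ) < ‖k‖ := norm_pos_iff.mpr hk
  set s : ℝ := ‖k‖ with hsdef
  set k0 : ℝ := k 0 with hk0def
  set k1 : ℝ := k 1 with hk1def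
  set φ : ℝ := Complex.arg (k0 + k1 * Complex.I) with hφdef
  set g : EuclideanSpace ℝ (Fin 2) → ℂ := fun x =>
    (((-1 / (2 * π)) * Real.log ‖x‖ : ℝ) : ℂ) * Complex.exp (-Complex.I * (⟪k, x⟫_ℝ : ℂ))
    with hg
  -- basic facts about k
  have hk_norm : s = Real.sqrt (k0^2 + k1^2) := by
    rw [hsdef, EuclideanSpace.norm_eq]
    simp [Fin.sum_univ_two, Real.norm_eq_abs, sq_abs]
    rfl
  have habs : ‖(k0 + k1 * Complex.I : ℂ)‖ = s := by
    rw [Complex.norm_def, Complex.normSq_add_mul_I, ← hk_norm]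
  have hw : (k0 : ℂ) + k1 * Complex.I ≠ 0 := by
    intro h
    rw [h] at habs
    simp only [norm_zero] at habs
    exact hs.ne' habs.symm
  have hcos : s * Real.cos φ = k0 := by
    rw [hφdef, Complex.cos_arg hw, habs]
    simp only [Complex.add_re, Complex.ofReal_re, Complex.mul_re, Complex.ofReal_im,
      Complex.I_re, Complex.I_im]
    field_simp
    ring
  have hsin : s * Real.sin φ = k1 := by
    rw [hφdef, Complex.sin_arg, habs]
    simp only [Complex.add_im, Complex.ofReal_im, Complex.mul_im, Complex.ofReal_re,
      Complex.I_re, Complex.I_im]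
    field_simp
    ring
  have hphase : ∀ r θ : ℝ, k0 * (r * Real.cos θ) + k1 * (r * Real.sin θ)
      = s * r * Real.cos (θ - φ) := by
    intro r θ
    rw [Real.cos_sub, ← hcos, ← hsin]
    ring
  -- the measure preserving equivalence ℝ × ℝ ≃ EuclideanSpace ℝ (Fin 2)
  set q : (ℝ × ℝ) ≃ᵐ EuclideanSpace ℝ (Fin 2) :=
    ((MeasurableEquiv.finTwoArrow (α := ℝ)).symm.trans
      (MeasurableEquiv.toLp 2 (Fin 2 → ℝ))) with hqdef
  have hq : MeasurePreserving q := by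
    have h1 := (volume_preserving_finTwoArrow ℝ).symm
    have h2 := (EuclideanSpace.volume_preserving_symm_measurableEquiv_toLp (Fin 2)).symm
    exact h2.comp h1
  have hq_apply : ∀ p : ℝ × ℝ, (q p) 0 = p.1 ∧ (q p) 1 = p.2 := by
    intro p
    constructor <;>
      simp [hqdef, MeasurableEquiv.finTwoArrow, MeasurableEquiv.coe_toLp]
  have hqnorm : ∀ p : ℝ × ℝ, ‖q p‖ = Real.sqrt (p.1^2 + p.2^2) := by
    intro p
    rw [EuclideanSpace.norm_eq]
    simp [Fin.sum_univ_two, Real.norm_eq_abs, sq_abs, (hq_apply p).1, (hq_apply p).2]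
  have hqinner : ∀ p : ℝ × ℝ, ⟪k, q p⟫_ℝ = k0 * p.1 + k1 * p.2 := by
    intro p
    rw [PiLp.inner_apply]
    simp [Fin.sum_univ_two, (hq_apply p).1, (hq_apply p).2, hk0def, hk1def]
    ring
  -- sets and auxiliary functions
  set T : Set (ℝ × ℝ) := {p | Real.sqrt (p.1^2 + p.2^2) < L} with hTdef
  have hTmeas : MeasurableSet T :=
    measurableSet_lt (by fun_prop) measurable_const
  set G : ℝ × ℝ → ℂ := fun p =>
    (((-1 / (2 * π)) * Real.log (Real.sqrt (p.1^2 + p.2^2)) : ℝ) : ℂ)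
      * Complex.exp (-Complex.I * ((k0 * p.1 + k1 * p.2 : ℝ) : ℂ)) with hGdef
  set H : ℝ × ℝ → ℂ := fun p =>
    (((-1 / (2 * π)) * Real.log p.1 : ℝ) : ℂ)
      * Complex.exp (-Complex.I * ((s * p.1 * Real.cos (p.2 - φ) : ℝ) : ℂ)) with hHdef
  -- Step A: transfer to ℝ × ℝ
  have stepA : (∫ x in Metric.ball (0 : EuclideanSpace ℝ (Fin 2)) L, g x) = ∫ p in T, G p := by
    rw [← hq.setIntegral_preimage_emb q.measurableEmbedding g (Metric.ball 0 L)]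
    have hpre : q ⁻¹' (Metric.ball 0 L) = T := by
      ext p
      rw [Set.mem_preimage, Metric.mem_ball, dist_zero_right, hqnorm p]
      exact Iff.rfl
    rw [hpre]
    refine setIntegral_congr_fun hTmeas (fun p _ => ?_)
    rw [hg]
    simp only [hqnorm p, hqinner p, hGdef]
  -- Step B: polar coordinates
  have stepB : (∫ p in T, G p)
      = ∫ p in polarCoord.target, p.1 • (T.indicator G) (polarCoord.symm p) := by
    rw [← integral_indicator hTmeas, ← integral_comp_polarCoord_symm (T.indicator G)]
  -- Step C: rewrite the integrand on the target
  have stepC : (∫ p in polarCoord.target, p.1 • (T.indicator G) (polarCoord.symm p))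
      = ∫ p in polarCoord.target,
          Set.indicator {p : ℝ × ℝ | p.1 < L} (fun p => p.1 • H p) p := by
    refine setIntegral_congr_fun (polarCoord.open_target.measurableSet) (fun p hp => ?_)
    rw [polarCoord_target] at hp
    obtain ⟨hp1, hp2⟩ := hp
    have hp1' : (0:ℝ) < p.1 := hp1
    have hsq : Real.sqrt ((p.1 * Real.cos p.2)^2 + (p.1 * Real.sin p.2)^2) = p.1 := by
      rw [show (p.1 * Real.cos p.2)^2 + (p.1 * Real.sin p.2)^2
          = p.1^2 * ((Real.cos p.2)^2 + (Real.sin p.2)^2) by ring,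
        Real.cos_sq_add_sin_sq, mul_one, Real.sqrt_sq hp1'.le]
    have hmem : polarCoord.symm p ∈ T ↔ p.1 < L := by
      rw [hTdef]
      simp only [Set.mem_setOf_eq, polarCoord_symm_apply, hsq]
    rw [Set.indicator_apply, Set.indicator_apply]
    simp only [Set.mem_setOf_eq]
    by_cases hlt : p.1 < L
    · rw [if_pos (hmem.mpr hlt), if_pos hlt]
      congr 1
      rw [hGdef, hHdef]
      simp only [polarCoord_symm_apply, hsq, hphase p.1 p.2]
    · rw [if_neg (fun h => hlt (hmem.mp h)), if_neg hlt, smul_zero]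
  -- Step D: reduce to the product set
  have stepD : (∫ p in polarCoord.target,
        Set.indicator {p : ℝ × ℝ | p.1 < L} (fun p => p.1 • H p) p)
      = ∫ p in Set.Ioo (0:ℝ) L ×ˢ Set.Ioo (-π) π, p.1 • H p := by
    rw [setIntegral_indicator (measurableSet_lt measurable_fst measurable_const)]
    have hset : polarCoord.target ∩ {a : ℝ × ℝ | a.1 < L}
        = Set.Ioo (0:ℝ) L ×ˢ Set.Ioo (-π) π := by
      rw [polarCoord_target]
      ext p
      simp only [Set.mem_inter_iff, Set.mem_prod, Set.mem_Ioi, Set.mem_Ioo, Set.mem_setOf_eq]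
      tauto
    rw [hset]
  -- bound for |x log x| on (0, L)
  have hbound : ∀ x ∈ Set.Ioo (0:ℝ) L, |x * Real.log x|
      ≤ 2 * Real.sqrt L + L * |Real.log L| := by
    intro x hx
    rcases le_or_gt x 1 with hx1 | hx1
    · have hlog : Real.log x ≤ 0 := Real.log_nonpos hx.1.le hx1
      have hsx : 0 < Real.sqrt x := Real.sqrt_pos.mpr hx.1
      have h1 : Real.log (Real.sqrt x)⁻¹ ≤ (Real.sqrt x)⁻¹ - 1 :=
        Real.log_le_sub_one_of_pos (inv_pos.mpr hsx)
      rw [Real.log_inv, Real.log_sqrt hx.1.le] at h1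
      have h2 : -Real.log x ≤ 2 * (Real.sqrt x)⁻¹ := by linarith
      have h3 : x * -Real.log x ≤ x * (2 * (Real.sqrt x)⁻¹) :=
        mul_le_mul_of_nonneg_left h2 hx.1.le
      have h4 : x * (2 * (Real.sqrt x)⁻¹) = 2 * Real.sqrt x := by
        rw [show x * (2 * (Real.sqrt x)⁻¹) = 2 * (x / Real.sqrt x) by ring, Real.div_sqrt]
      have h5 : Real.sqrt x ≤ Real.sqrt L := Real.sqrt_le_sqrt hx.2.le
      have h6 : |x * Real.log x| = x * -Real.log x := by
        rw [abs_mul, abs_of_pos hx.1, abs_of_nonpos hlog]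
      nlinarith [abs_nonneg (Real.log L), hL.le]
    · have hlog : 0 ≤ Real.log x := Real.log_nonneg hx1.le
      have h1 : Real.log x ≤ Real.log L := Real.log_le_log hx.1 hx.2.le
      have h6 : |x * Real.log x| = x * Real.log x := by
        rw [abs_of_nonneg (mul_nonneg (le_of_lt hx.1) hlog)]
      have h7 : Real.log L ≤ |Real.log L| := le_abs_self _
      have h8 : x * Real.log x ≤ L * |Real.log L| :=
        mul_le_mul hx.2.le (h1.trans h7) hlog (by linarith)
      nlinarith [Real.sqrt_nonneg L]
  have hexp1 : ∀ t : ℝ, ‖Complex.exp (-Complex.I * (t:ℂ))‖ = 1 := by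
    intro t
    rw [Complex.norm_exp]
    simp
  -- integrability on the product set
  have hmeasSet : MeasurableSet (Set.Ioo (0:ℝ) L ×ˢ Set.Ioo (-π) π) :=
    measurableSet_Ioo.prod measurableSet_Ioo
  have hInt : IntegrableOn (fun p : ℝ × ℝ => p.1 • H p)
      (Set.Ioo (0:ℝ) L ×ˢ Set.Ioo (-π) π) (volume.prod volume) := by
    have hsub : Set.Ioo (0:ℝ) L ×ˢ Set.Ioo (-π) π ⊆ {p : ℝ × ℝ | 0 < p.1} :=
      fun p hp => hp.1.1
    have hcont : ContinuousOn (fun p : ℝ × ℝ => p.1 • H p) {p : ℝ × ℝ | 0 < p.1} := by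
      apply ContinuousOn.smul continuousOn_fst
      rw [hHdef]
      apply ContinuousOn.mul
      · apply Complex.continuous_ofReal.comp_continuousOn
        apply ContinuousOn.mul continuousOn_const
        exact Real.continuousOn_log.comp continuousOn_fst (fun p hp => ne_of_gt hp)
      · exact Continuous.continuousOn (by fun_prop)
    have hmeas : AEStronglyMeasurable (fun p : ℝ × ℝ => p.1 • H p)
        ((volume.prod volume).restrict (Set.Ioo (0:ℝ) L ×ˢ Set.Ioo (-π) π)) := by
      rw [← Measure.volume_eq_prod]
      exact (hcont.mono hsub).aestronglyMeasurable hmeasSet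
    refine Integrable.mono' (g := fun _ : ℝ × ℝ =>
      (2 * Real.sqrt L + L * |Real.log L|) * (1 / (2*π)))
      ?_ hmeas ?_
    · refine (integrableOn_const_iff (by finiteness)).mpr (Or.inr ?_)
      rw [Measure.prod_prod, Real.volume_Ioo, Real.volume_Ioo]
      exact ENNReal.mul_lt_top ENNReal.ofReal_lt_top ENNReal.ofReal_lt_top
    · rw [ae_restrict_iff' hmeasSet]
      filter_upwards with p hp
      have hp1 : 0 < p.1 := hp.1.1
      rw [norm_smul, hHdef]
      simp only [norm_mul, Real.norm_eq_abs, Complex.norm_real]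
      rw [hexp1, mul_one]
      have : |p.1| * |(-1 / (2*π)) * Real.log p.1| = |p.1 * Real.log p.1| * (1/(2*π)) := by
        rw [abs_mul, abs_mul, abs_div, abs_neg, abs_one, abs_of_pos (by positivity : (0:ℝ) < 2*π)]
        ring
      rw [← abs_mul, this]
      have hb := hbound p.1 hp.1
      have hpos : (0:ℝ) < 1/(2*π) := by positivity
      exact mul_le_mul_of_nonneg_right hb hpos.le
  -- Step E: Fubini
  have stepE : (∫ p in Set.Ioo (0:ℝ) L ×ˢ Set.Ioo (-π) π, p.1 • H p)
      = ∫ r in Set.Ioo (0:ℝ) L, ∫ θ in Set.Ioo (-π) π, r • H (r, θ) := by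
    rw [Measure.volume_eq_prod]
    exact setIntegral_prod _ hInt
  -- Step F: the angular integral
  have hinner : ∀ r : ℝ, (∫ θ in Set.Ioo (-π) π, r • H (r, θ))
      = ((-(r * Real.log r * besselJ0 (s * r)) : ℝ) : ℂ) := by
    intro r
    have h1 : ∀ θ : ℝ, r • H (r, θ) = ((r * ((-1 / (2*π)) * Real.log r) : ℝ) : ℂ) *
        Complex.exp (-Complex.I * ((s * r * Real.cos (θ - φ) : ℝ) : ℂ)) := by
      intro θ
      rw [hHdef, Complex.real_smul]
      push_cast
      ring
    simp only [h1]
    rw [MeasureTheory.integral_const_mul]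
    rw [← integral_Ioc_eq_integral_Ioo,
      ← intervalIntegral.integral_of_le (by linarith [Real.pi_pos] : -π ≤ π),
      angular_integral (s*r) φ, ← Complex.ofReal_mul]
    rw [Complex.ofReal_inj]
    field_simp
  -- assemble everything
  rw [stepA, stepB, stepC, stepD, stepE]
  simp only [hinner]
  have hco : (∫ r in Set.Ioo (0:ℝ) L, ((-(r * Real.log r * besselJ0 (s * r)) : ℝ) : ℂ))
      = (((∫ r in Set.Ioo (0:ℝ) L, -(r * Real.log r * besselJ0 (s * r))) : ℝ) : ℂ) :=
    integral_ofReal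
  rw [hco, Complex.ofReal_inj]
  rw [← integral_Ioc_eq_integral_Ioo, ← intervalIntegral.integral_of_le hL.le,
    intervalIntegral.integral_neg, radial_integral hs hL]
  rw [show L * s = s * L from mul_comm L s]
  ring
end

section
/- Let d ≥ 1, N ≥ 1, let K ⊂ ℝ^d be a finite set closed under negation, let G : ℝ^d → ℝ be even, and let Ŝ : ℝ^d → ℂ be conjugate-symmetric (Ŝ(−k) = conj(Ŝ(k))). For positions X₁,…,X_N ∈ ℝ^d define the discrete force on particle s as the real vector F_s(X) = Σ_{k∈K} (−i k) G(k) |Ŝ(k)|² exp(i⟨k,X_s⟩) Σ_{j=1}^N exp(−i⟨k,X_j⟩) ∈ ℝ^d. Then the total force vanishes identically: Σ_{s=1}^N F_s(X) = 0 for all positions X. In particular the PIF scheme conserves total momentum exactly in the continuous-time dynamics. -/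
open scoped InnerProductSpace BigOperators

/-- The `ℓ`-th complex component of the PIF force on particle `s`:
`Σ_{k∈K} (−i k_ℓ) G(k) |Ŝ(k)|² exp(i⟨k,X_s⟩) Σ_j exp(−i⟨k,X_j⟩)`. -/
noncomputable def pifForceC {d N : ℕ} (K : Finset (EuclideanSpace ℝ (Fin d)))
    (G : EuclideanSpace ℝ (Fin d) → ℝ) (Shat : EuclideanSpace ℝ (Fin d) → ℂ)
    (X : Fin N → EuclideanSpace ℝ (Fin d)) (s : Fin N) (ℓ : Fin d) : ℂ :=
  ∑ k ∈ K, (-Complex.I * (k ℓ : ℂ)) * (G k : ℂ) * ((‖Shat k‖ : ℝ) : ℂ) ^ 2 *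
    Complex.exp (Complex.I * (⟪k, X s⟫_ℝ : ℂ)) *
    ∑ j, Complex.exp (-Complex.I * (⟪k, X j⟫_ℝ : ℂ))

/-- The PIF force on particle `s` as a real vector in `ℝ^d` (the real part of the
complex PIF force formula, which has vanishing imaginary part under the symmetry
assumptions on `K`, `G`, `Ŝ`). -/
noncomputable def pifForce {d N : ℕ} (K : Finset (EuclideanSpace ℝ (Fin d)))
    (G : EuclideanSpace ℝ (Fin d) → ℝ) (Shat : EuclideanSpace ℝ (Fin d) → ℂ)
    (X : Fin N → EuclideanSpace ℝ (Fin d)) (s : Fin N) : EuclideanSpace ℝ (Fin d) :=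
  (EuclideanSpace.equiv (Fin d) ℝ).symm fun ℓ => (pifForceC K G Shat X s ℓ).re

/-- The discrete PIF potential energy
`U_E(X) = (1/2) Σ_{k∈K} G(k) |Ŝ(k)|² |Σ_j exp(−i⟨k,X_j⟩)|²`. -/
noncomputable def pifPotentialEnergy {d N : ℕ} (K : Finset (EuclideanSpace ℝ (Fin d)))
    (G : EuclideanSpace ℝ (Fin d) → ℝ) (Shat : EuclideanSpace ℝ (Fin d) → ℂ)
    (X : Fin N → EuclideanSpace ℝ (Fin d)) : ℝ :=
  (1 / 2) * ∑ k ∈ K, G k * (‖Shat k‖) ^ 2 *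
    (‖∑ j, Complex.exp (-Complex.I * (⟪k, X j⟫_ℝ : ℂ))‖) ^ 2

/-- The kinetic energy `U_K(V) = (1/2) Σ_s ‖V_s‖²`. -/
noncomputable def kineticEnergy {d N : ℕ}
    (V : Fin N → EuclideanSpace ℝ (Fin d)) : ℝ :=
  (1 / 2) * ∑ s, ‖V s‖ ^ 2

/-- **Exact momentum conservation in PIF.**
Under the symmetry assumptions on `K`, `G`, `Ŝ`, the total PIF force vanishes:
`Σ_s F_s(X) = 0` for all positions `X`. -/
theorem pifForce_total_eq_zero
    (d : ℕ) (hd : 1 ≤ d) (N : ℕ) (hN : 1 ≤ N)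
    (K : Finset (EuclideanSpace ℝ (Fin d))) (hK : ∀ k ∈ K, -k ∈ K)
    (G : EuclideanSpace ℝ (Fin d) → ℝ) (hG : ∀ k, G (-k) = G k)
    (Shat : EuclideanSpace ℝ (Fin d) → ℂ)
    (hShat : ∀ k, Shat (-k) = starRingEnd ℂ (Shat k))
    (X : Fin N → EuclideanSpace ℝ (Fin d)) :
    ∑ s, pifForce K G Shat X s = 0 := by
  have key : ∀ ℓ : Fin d, (∑ s, pifForceC K G Shat X s ℓ) = 0 := by
    intro ℓ
    unfold pifForceC
    rw [Finset.sum_comm]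
    have hval : ∀ k : EuclideanSpace ℝ (Fin d),
        (∑ s, (-Complex.I * (k ℓ : ℂ)) * (G k : ℂ) * ((‖Shat k‖ : ℝ) : ℂ) ^ 2 *
          Complex.exp (Complex.I * (⟪k, X s⟫_ℝ : ℂ)) *
          ∑ j, Complex.exp (-Complex.I * (⟪k, X j⟫_ℝ : ℂ))) =
        ((-Complex.I * (k ℓ : ℂ)) * (G k : ℂ) * ((‖Shat k‖ : ℝ) : ℂ) ^ 2 *
          ∑ j, Complex.exp (-Complex.I * (⟪k, X j⟫_ℝ : ℂ))) *
          ∑ s, Complex.exp (Complex.I * (⟪k, X s⟫_ℝ : ℂ)) := by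
      intro k
      rw [Finset.mul_sum]
      exact Finset.sum_congr rfl fun s _ => by ring
    refine Finset.sum_involution (fun k _ => -k) (fun k hk => ?_) (fun k hk h hkk => ?_)
      (fun k hk => hK k hk) (fun k hk => neg_neg k)
    · beta_reduce
      rw [hval k, hval (-k)]
      simp only [PiLp.neg_apply, hG, hShat, Complex.norm_conj, inner_neg_left,
        Complex.ofReal_neg, mul_neg, neg_mul, neg_neg]
      ring
    · apply h
      have hk0 : k = 0 := by
        have h2 : -k = k := hkk
        have hsum : k + k = 0 := by
          nth_rewrite 2 [← h2]
          simp
        have h2s : (2 : ℝ) • k = 0 := by simpa [two_smul] using hsum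
        simpa using (smul_eq_zero.mp h2s).resolve_left (by norm_num)
      rw [hval, hk0]
      simp
  have hcomp : ∀ ℓ : Fin d, (∑ s, pifForce K G Shat X s) ℓ = 0 := by
    intro ℓ
    have h1 : (∑ s, pifForce K G Shat X s) ℓ = ∑ s, (pifForceC K G Shat X s ℓ).re := by
      rw [WithLp.ofLp_sum, Finset.sum_apply]
      rfl
    rw [h1, ← Complex.re_sum, key ℓ, Complex.zero_re]
  ext ℓ
  exact hcomp ℓ
end

section
/- Let d ≥ 1, N ≥ 1, let K ⊂ ℝ^d be a finite set closed under negation, let G : ℝ^d → ℝ be even, and let Ŝ : ℝ^d → ℂ be conjugate-symmetric. Define the discrete potential energy U_E(X) = (1/2) Σ_{k∈K} G(k) |Ŝ(k)|² |Σ_{j=1}^N exp(−i⟨k,X_j⟩)|², the kinetic energy U_K(V) = (1/2) Σ_{s=1}^N ‖V_s‖², and the real force vectors F_s(X) = Σ_{k∈K} (−i k) G(k) |Ŝ(k)|² exp(i⟨k,X_s⟩) Σ_{j=1}^N exp(−i⟨k,X_j⟩). Fix X = (X₁,…,X_N) and V = (V₁,…,V_N) in ℝ^d, and for Δt > 0 define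 one velocity-Verlet (leapfrog) step by X'_s = X_s + Δt·V_s + (Δt²/2)·F_s(X) and V'_s = V_s + (Δt/2)·(F_s(X) + F_s(X')). Then there exists C > 0, depending on X, V, K, G, Ŝ and N but not on Δt, such that for all Δt ∈ (0,1] the total energy change over one step satisfies |(U_K(V') + U_E(X')) − (U_K(V) + U_E(X))| ≤ C·Δt². That is, the particle-in-Fourier scheme with leapfrog time integration conserves the total discrete energy up to an error of second order in the time step, for both the periodic and the free-space (truncated Green's function) field solvers. -/
open scoped InnerProductSpace BigOperators

section helpers

lemma quad_bound (f : ℝ → ℝ) (hf : ContDiff ℝ 2 f) (h0 : deriv f 0 = 0) :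
    ∃ C : ℝ, 0 < C ∧ ∀ t : ℝ, 0 < t → t ≤ 1 → |f t - f 0| ≤ C * t ^ 2 := by
  have h2 := (contDiff_succ_iff_deriv.mp (by norm_num at hf ⊢; exact hf : ContDiff ℝ (1+1) f))
  have hd1 : Differentiable ℝ f := h2.1
  have h3 := contDiff_succ_iff_deriv.mp (by norm_num at h2 ⊢; exact h2.2 : ContDiff ℝ (0+1) (deriv f))
  have hd2 : Differentiable ℝ (deriv f) := h3.1
  have hc2 : Continuous (deriv (deriv f)) := h3.2.2.continuous
  obtain ⟨M, hM⟩ := (isCompact_Icc (a := (0:ℝ)) (b := 1)).exists_bound_of_continuousOn hc2.continuousOn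
  have hM0 : 0 ≤ M := le_trans (norm_nonneg _) (hM 0 (by norm_num))
  refine ⟨M + 1, by positivity, fun t ht ht1 => ?_⟩
  have key1 : ∀ u ∈ Set.Icc (0:ℝ) 1, |deriv f u| ≤ M * u := by
    intro u hu
    have := norm_image_sub_le_of_norm_deriv_le_segment' (a := 0) (b := 1)
      (f := deriv f) (f' := deriv (deriv f)) (C := M)
      (fun x _ => (hd2 x).hasDerivAt.hasDerivWithinAt)
      (fun x hx => hM x ⟨hx.1, hx.2.le⟩) u hu
    simpa [h0, Real.norm_eq_abs] using this
  have key2 : |f t - f 0| ≤ (M * t) * t := by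
    have := norm_image_sub_le_of_norm_deriv_le_segment' (a := 0) (b := t)
      (f := f) (f' := deriv f) (C := M * t)
      (fun x _ => (hd1 x).hasDerivAt.hasDerivWithinAt)
      (fun x hx => by
        have h1 := key1 x ⟨hx.1, le_trans hx.2.le ht1⟩
        have : M * x ≤ M * t := mul_le_mul_of_nonneg_left hx.2.le hM0
        simpa [Real.norm_eq_abs] using le_trans h1 this)
      t (Set.right_mem_Icc.mpr ht.le)
    simpa [Real.norm_eq_abs] using this
  calc |f t - f 0| ≤ (M * t) * t := key2
    _ = M * t ^ 2 := by ring
    _ ≤ (M + 1) * t ^ 2 := by nlinarith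

lemma hasDerivAt_poly0 (A B Q : ℝ) :
    HasDerivAt (fun t : ℝ => A + t * B + t ^ 2 / 2 * Q) B 0 := by
  have h := ((hasDerivAt_const (0:ℝ) A).fun_add ((hasDerivAt_id (0:ℝ)).mul_const B)).fun_add
    (((hasDerivAt_pow 2 (0:ℝ)).div_const 2).mul_const Q)
  simpa using h

lemma hasDerivAt_cexpPoly (c0 : ℂ) (A B Q : ℝ) :
    HasDerivAt (fun t : ℝ => Complex.exp (c0 * ((A + t * B + t ^ 2 / 2 * Q : ℝ) : ℂ)))
      (Complex.exp (c0 * (A : ℂ)) * (c0 * (B : ℂ))) 0 := by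
  have h1 := (hasDerivAt_poly0 A B Q).ofReal_comp
  have h2 := h1.const_mul c0
  have h3 := h2.cexp
  simpa using h3

lemma contDiff_cexpPoly (c0 : ℂ) (A B Q : ℝ) :
    ContDiff ℝ 2 (fun t : ℝ => Complex.exp (c0 * ((A + t * B + t ^ 2 / 2 * Q : ℝ) : ℂ))) := by
  have h : ContDiff ℝ 2 (fun t : ℝ => ((A + t * B + t ^ 2 / 2 * Q : ℝ) : ℂ)) :=
    Complex.ofRealCLM.contDiff.comp ((contDiff_const.add (contDiff_id.mul contDiff_const)).add (((contDiff_id.pow 2).div_const 2).mul contDiff_const))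
  exact Complex.contDiff_exp.comp (contDiff_const.mul h)

lemma hasDerivAt_cre {f : ℝ → ℂ} {f' : ℂ} {x : ℝ} (h : HasDerivAt f f' x) :
    HasDerivAt (fun t => (f t).re) f'.re x :=
  Complex.reCLM.hasFDerivAt.comp_hasDerivAt x h

lemma hasDerivAt_cim {f : ℝ → ℂ} {f' : ℂ} {x : ℝ} (h : HasDerivAt f f' x) :
    HasDerivAt (fun t => (f t).im) f'.im x :=
  Complex.imCLM.hasFDerivAt.comp_hasDerivAt x h

lemma contDiff_cre {f : ℝ → ℂ} (h : ContDiff ℝ 2 f) : ContDiff ℝ 2 fun t => (f t).re :=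
  Complex.reCLM.contDiff.comp h

lemma contDiff_cim {f : ℝ → ℂ} (h : ContDiff ℝ 2 f) : ContDiff ℝ 2 fun t => (f t).im :=
  Complex.imCLM.contDiff.comp h

lemma enorm_sq {d : ℕ} (w : EuclideanSpace ℝ (Fin d)) : ‖w‖ ^ 2 = ∑ ℓ, (w ℓ) ^ 2 := by
  rw [EuclideanSpace.norm_sq_eq]; simp [Real.norm_eq_abs, sq_abs]

lemma sum_rot {N d : ℕ} {γ : Type*} (K : Finset γ) (f : Fin N → Fin d → γ → ℝ) :
    ∑ s, ∑ ℓ, ∑ k ∈ K, f s ℓ k = ∑ k ∈ K, ∑ s, ∑ ℓ, f s ℓ k :=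
  (Finset.sum_congr rfl fun s _ => Finset.sum_comm).trans Finset.sum_comm

end helpers

/-- **Second-order energy conservation of the PIF scheme with leapfrog integration.**
With `X'_s = X_s + Δt V_s + (Δt²/2) F_s(X)` and `V'_s = V_s + (Δt/2)(F_s(X) + F_s(X'))`,
there is a constant `C > 0` independent of `Δt` such that for all `Δt ∈ (0,1]`,
`|(U_K(V') + U_E(X')) − (U_K(V) + U_E(X))| ≤ C Δt²`. -/
theorem pif_leapfrog_energy_conservation
    (d : ℕ) (hd : 1 ≤ d) (N : ℕ) (hN : 1 ≤ N)
    (K : Finset (EuclideanSpace ℝ (Fin d))) (hK : ∀ k ∈ K, -k ∈ K)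
    (G : EuclideanSpace ℝ (Fin d) → ℝ) (hG : ∀ k, G (-k) = G k)
    (Shat : EuclideanSpace ℝ (Fin d) → ℂ)
    (hShat : ∀ k, Shat (-k) = starRingEnd ℂ (Shat k))
    (X V : Fin N → EuclideanSpace ℝ (Fin d)) :
    ∃ C : ℝ, 0 < C ∧ ∀ Δt : ℝ, 0 < Δt → Δt ≤ 1 →
      |(kineticEnergy
          (fun s => V s + (Δt / 2) • (pifForce K G Shat X s +
            pifForce K G Shat
              (fun j => X j + Δt • V j + (Δt ^ 2 / 2) • pifForce K G Shat X j) s))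
        + pifPotentialEnergy K G Shat
            (fun s => X s + Δt • V s + (Δt ^ 2 / 2) • pifForce K G Shat X s))
        - (kineticEnergy V + pifPotentialEnergy K G Shat X)| ≤ C * Δt ^ 2 := by
  classical
  set F : Fin N → EuclideanSpace ℝ (Fin d) := pifForce K G Shat X with hF
  -- scalar data
  set a : EuclideanSpace ℝ (Fin d) → Fin N → ℝ := fun k j => ⟪k, X j⟫_ℝ with ha
  set b : EuclideanSpace ℝ (Fin d) → Fin N → ℝ := fun k j => ⟪k, V j⟫_ℝ with hb
  set q : EuclideanSpace ℝ (Fin d) → Fin N → ℝ := fun k j => ⟪k, F j⟫_ℝ with hq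
  -- the force-at-time-t component function
  set Ψ : ℝ → Fin N → Fin d → ℝ := fun t s ℓ =>
    (∑ k ∈ K, (-Complex.I * (k ℓ : ℂ)) * (G k : ℂ) * ((‖Shat k‖ : ℝ) : ℂ) ^ 2 *
      Complex.exp (Complex.I * ((a k s + t * b k s + t ^ 2 / 2 * q k s : ℝ) : ℂ)) *
      ∑ j, Complex.exp (-Complex.I * ((a k j + t * b k j + t ^ 2 / 2 * q k j : ℝ) : ℂ))).re
    with hΨ
  set g : ℝ → ℝ := fun t =>
    (1/2) * ∑ s, ∑ ℓ, (V s ℓ + t / 2 * ((pifForceC K G Shat X s ℓ).re + Ψ t s ℓ)) ^ 2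
    + (1/2) * ∑ k ∈ K, G k * ‖Shat k‖ ^ 2 *
        ((∑ j, Complex.exp (-Complex.I * ((a k j + t * b k j + t ^ 2 / 2 * q k j : ℝ) : ℂ))).re *
          (∑ j, Complex.exp (-Complex.I * ((a k j + t * b k j + t ^ 2 / 2 * q k j : ℝ) : ℂ))).re +
        (∑ j, Complex.exp (-Complex.I * ((a k j + t * b k j + t ^ 2 / 2 * q k j : ℝ) : ℂ))).im *
          (∑ j, Complex.exp (-Complex.I * ((a k j + t * b k j + t ^ 2 / 2 * q k j : ℝ) : ℂ))).im)
    with hg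
  -- inner product of k with the moved particle
  have hinner : ∀ (t : ℝ) (k y v w : EuclideanSpace ℝ (Fin d)),
      ⟪k, y + t • v + (t ^ 2 / 2) • w⟫_ℝ =
        ⟪k, y⟫_ℝ + t * ⟪k, v⟫_ℝ + t ^ 2 / 2 * ⟪k, w⟫_ℝ := by
    intro t k y v w
    rw [inner_add_right, inner_add_right, real_inner_smul_right, real_inner_smul_right]
  have hequiv : ∀ (fn : Fin d → ℝ) (ℓ : Fin d),
      ((EuclideanSpace.equiv (Fin d) ℝ).symm fn) ℓ = fn ℓ := fun _ _ => rfl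
  -- the energy expression equals g
  have hEq : ∀ t : ℝ,
      (kineticEnergy
          (fun s => V s + (t / 2) • (pifForce K G Shat X s +
            pifForce K G Shat
              (fun j => X j + t • V j + (t ^ 2 / 2) • pifForce K G Shat X j) s))
        + pifPotentialEnergy K G Shat
            (fun s => X s + t • V s + (t ^ 2 / 2) • pifForce K G Shat X s)) = g t := by
    simp only [hg, hΨ, ha, hb, hq, hF, kineticEnergy, pifPotentialEnergy, pifForce, pifForceC,
      enorm_sq, hequiv, PiLp.add_apply, PiLp.smul_apply, smul_eq_mul, hinner,
      Complex.sq_norm, Complex.normSq_apply]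
    exact fun _ => trivial
  have hbase : kineticEnergy V + pifPotentialEnergy K G Shat X = g 0 := by
    have h0 : ∀ A B Q : ℝ, A + (0:ℝ) * B + (0:ℝ) ^ 2 / 2 * Q = A := by intro A B Q; ring
    simp only [hg, hΨ, ha, hb, hq, hF, kineticEnergy, pifPotentialEnergy, pifForce, pifForceC,
      enorm_sq, hequiv, h0, Complex.sq_norm, Complex.normSq_apply, neg_mul,
      zero_div, zero_mul, add_zero, zero_pow, ne_eq, OfNat.ofNat_ne_zero,
      not_false_eq_true]
  -- smoothness of the S-sums
  have hSC : ∀ k, ContDiff ℝ 2 (fun t =>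
      ∑ j, Complex.exp (-Complex.I * ((a k j + t * b k j + t ^ 2 / 2 * q k j : ℝ) : ℂ))) :=
    fun k => ContDiff.sum fun j _ => contDiff_cexpPoly (-Complex.I) (a k j) (b k j) (q k j)
  have hΨC : ∀ s ℓ, ContDiff ℝ 2 (fun t => Ψ t s ℓ) := by
    intro s ℓ
    simp only [hΨ]
    apply contDiff_cre
    apply ContDiff.sum
    intro k _
    exact (contDiff_const.mul (contDiff_cexpPoly Complex.I (a k s) (b k s) (q k s))).mul (hSC k)
  have hsmooth : ContDiff ℝ 2 g := by
    rw [hg]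
    refine ContDiff.add (contDiff_const.mul (ContDiff.sum fun s _ => ContDiff.sum fun ℓ _ => ?_))
      (contDiff_const.mul (ContDiff.sum fun k _ => ?_))
    · exact (contDiff_const.add ((contDiff_id.div_const 2).mul
        (contDiff_const.add (hΨC s ℓ)))).pow 2
    · exact contDiff_const.mul (((contDiff_cre (hSC k)).mul (contDiff_cre (hSC k))).add
        ((contDiff_cim (hSC k)).mul (contDiff_cim (hSC k))))
  -- value and derivative of the S-sums at 0
  set S0 : EuclideanSpace ℝ (Fin d) → ℂ := fun k =>
    ∑ j, Complex.exp (-Complex.I * ((a k j : ℝ) : ℂ)) with hS0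
  set DS : EuclideanSpace ℝ (Fin d) → ℂ := fun k =>
    ∑ j, Complex.exp (-Complex.I * ((a k j : ℝ) : ℂ)) * (-Complex.I * ((b k j : ℝ) : ℂ)) with hDS
  have hSd : ∀ k, HasDerivAt (fun t =>
      ∑ j, Complex.exp (-Complex.I * ((a k j + t * b k j + t ^ 2 / 2 * q k j : ℝ) : ℂ)))
      (DS k) 0 := by
    intro k
    rw [hDS]
    exact HasDerivAt.fun_sum fun j _ => hasDerivAt_cexpPoly (-Complex.I) (a k j) (b k j) (q k j)
  -- derivative of the squared modulus terms
  have hsq : ∀ k, HasDerivAt (fun t =>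
      (∑ j, Complex.exp (-Complex.I * ((a k j + t * b k j + t ^ 2 / 2 * q k j : ℝ) : ℂ))).re *
        (∑ j, Complex.exp (-Complex.I * ((a k j + t * b k j + t ^ 2 / 2 * q k j : ℝ) : ℂ))).re +
      (∑ j, Complex.exp (-Complex.I * ((a k j + t * b k j + t ^ 2 / 2 * q k j : ℝ) : ℂ))).im *
        (∑ j, Complex.exp (-Complex.I * ((a k j + t * b k j + t ^ 2 / 2 * q k j : ℝ) : ℂ))).im)
      (2 * ((S0 k).re * (DS k).re + (S0 k).im * (DS k).im)) 0 := by
    intro k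
    have hre := hasDerivAt_cre (hSd k)
    have him := hasDerivAt_cim (hSd k)
    have h := (hre.fun_mul hre).fun_add (him.fun_mul him)
    refine h.congr_deriv ?_
    simp only [hS0, zero_mul, add_zero, zero_pow, ne_eq, OfNat.ofNat_ne_zero,
      not_false_eq_true, zero_div]
    ring
  -- derivative of the potential part
  have hpot := HasDerivAt.const_mul (1/2 : ℝ) (HasDerivAt.fun_sum fun k (_ : k ∈ K) =>
    HasDerivAt.const_mul (G k * ‖Shat k‖ ^ 2) (hsq k))
  -- value of Ψ at 0
  have hΨ00 : ∀ s ℓ, Ψ 0 s ℓ = (pifForceC K G Shat X s ℓ).re := by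
    intro s ℓ
    simp only [hΨ, ha, hb, hq, pifForceC, zero_mul, add_zero, zero_pow, ne_eq,
      OfNat.ofNat_ne_zero, not_false_eq_true, zero_div]
  -- derivative of Ψ at 0 (value irrelevant)
  have hΨd : ∀ s ℓ, HasDerivAt (fun t => Ψ t s ℓ) (deriv (fun t => Ψ t s ℓ) 0) 0 :=
    fun s ℓ => (((hΨC s ℓ).differentiable (by norm_num)) 0).hasDerivAt
  -- derivative of the kinetic summands
  have hkin1 : ∀ s ℓ, HasDerivAt (fun t =>
      (V s ℓ + t / 2 * ((pifForceC K G Shat X s ℓ).re + Ψ t s ℓ)) ^ 2)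
      (2 * V s ℓ * (pifForceC K G Shat X s ℓ).re) 0 := by
    intro s ℓ
    have hin : HasDerivAt (fun t => V s ℓ + t / 2 * ((pifForceC K G Shat X s ℓ).re + Ψ t s ℓ))
        ((pifForceC K G Shat X s ℓ).re) 0 := by
      have h2 := ((hasDerivAt_id (0:ℝ)).div_const 2).fun_mul
        (HasDerivAt.const_add ((pifForceC K G Shat X s ℓ).re) (hΨd s ℓ))
      have h3 := HasDerivAt.const_add (V s ℓ) h2
      refine h3.congr_deriv ?_
      rw [hΨ00 s ℓ]
      simp
      ring
    have h4 := hin.fun_pow 2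
    refine h4.congr_deriv ?_
    rw [hΨ00 s ℓ]
    push_cast
    ring
  have hkin := HasDerivAt.const_mul (1/2 : ℝ) (HasDerivAt.fun_sum fun s (_ : s ∈ Finset.univ) =>
    HasDerivAt.fun_sum fun ℓ (_ : ℓ ∈ Finset.univ) => hkin1 s ℓ)
  have hgd : HasDerivAt g
      ((1/2 : ℝ) * ∑ s, ∑ ℓ, 2 * V s ℓ * (pifForceC K G Shat X s ℓ).re +
       (1/2 : ℝ) * ∑ k ∈ K, (G k * ‖Shat k‖ ^ 2) *
          (2 * ((S0 k).re * (DS k).re + (S0 k).im * (DS k).im))) 0 := by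
    rw [hg]
    exact hkin.add hpot
  -- per-k complex summand of the force
  set W : EuclideanSpace ℝ (Fin d) → Fin N → Fin d → ℂ := fun k s ℓ =>
    -Complex.I * (k ℓ : ℂ) * (G k : ℂ) * ((‖Shat k‖ : ℝ) : ℂ) ^ 2 *
      Complex.exp (Complex.I * ((a k s : ℝ) : ℂ)) * S0 k with hW
  have hFC : ∀ (s : Fin N) (ℓ : Fin d), (pifForceC K G Shat X s ℓ).re = ∑ k ∈ K, (W k s ℓ).re :=
    fun s ℓ => by
      rw [show pifForceC K G Shat X s ℓ = ∑ k ∈ K, W k s ℓ from rfl, Complex.re_sum]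
  -- conjugate of DS
  have hconj : ∀ k, (starRingEnd ℂ) (DS k) =
      ∑ j, Complex.exp (Complex.I * ((a k j : ℝ) : ℂ)) * (Complex.I * ((b k j : ℝ) : ℂ)) := by
    intro k
    simp only [hDS]
    rw [map_sum]
    refine Finset.sum_congr rfl fun j _ => ?_
    rw [map_mul, ← Complex.exp_conj]
    simp [map_mul, Complex.conj_ofReal, Complex.conj_I]
  -- the inner-ℓ sum collapses to an inner product
  have hsumℓ : ∀ k s, ∑ ℓ, ((V s ℓ : ℝ) : ℂ) * W k s ℓ =
      -Complex.I * ((b k s : ℝ) : ℂ) * (G k : ℂ) * ((‖Shat k‖ : ℝ) : ℂ) ^ 2 *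
        Complex.exp (Complex.I * ((a k s : ℝ) : ℂ)) * S0 k := by
    intro k s
    have hbs : b k s = ∑ ℓ, k ℓ * V s ℓ := by
      simp [hb, PiLp.inner_apply, RCLike.inner_apply, mul_comm]
    rw [hbs]
    simp only [hW]
    push_cast
    generalize S0 k = SS
    conv_rhs => rw [Finset.mul_sum, Finset.sum_mul, Finset.sum_mul, Finset.sum_mul,
      Finset.sum_mul]
    exact Finset.sum_congr rfl fun ℓ _ => by ring
  -- the per-k complex identity
  have hzero : ∀ k,
      (∑ s, -Complex.I * ((b k s : ℝ) : ℂ) * (G k : ℂ) * ((‖Shat k‖ : ℝ) : ℂ) ^ 2 *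
          Complex.exp (Complex.I * ((a k s : ℝ) : ℂ)) * S0 k) +
        ((G k * ‖Shat k‖ ^ 2 : ℝ) : ℂ) * (S0 k * (starRingEnd ℂ) (DS k)) = 0 := by
    intro k
    rw [hconj k]
    push_cast
    generalize S0 k = SS
    rw [Finset.mul_sum, Finset.mul_sum, ← Finset.sum_add_distrib]
    exact Finset.sum_eq_zero fun j _ => by ring
  have hderiv : deriv g 0 = 0 := by
    rw [hgd.deriv]
    calc (1/2 : ℝ) * ∑ s, ∑ ℓ, 2 * V s ℓ * (pifForceC K G Shat X s ℓ).re +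
        (1/2 : ℝ) * ∑ k ∈ K, (G k * ‖Shat k‖ ^ 2) *
          (2 * ((S0 k).re * (DS k).re + (S0 k).im * (DS k).im))
        = ∑ k ∈ K, ((∑ s, ∑ ℓ, V s ℓ * (W k s ℓ).re) +
            (G k * ‖Shat k‖ ^ 2) *
              ((S0 k).re * (DS k).re + (S0 k).im * (DS k).im)) := by
          rw [Finset.sum_add_distrib]
          congr 1
          · rw [Finset.mul_sum, ← sum_rot K fun s ℓ k => V s ℓ * (W k s ℓ).re]
            refine Finset.sum_congr rfl fun s _ => ?_
            rw [Finset.mul_sum]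
            refine Finset.sum_congr rfl fun ℓ _ => ?_
            rw [hFC s ℓ, Finset.mul_sum, Finset.mul_sum]
            exact Finset.sum_congr rfl fun k _ => by ring
          · rw [Finset.mul_sum]
            exact Finset.sum_congr rfl fun k _ => by ring
      _ = ∑ k ∈ K,
          ((∑ s, -Complex.I * ((b k s : ℝ) : ℂ) * (G k : ℂ) *
              ((‖Shat k‖ : ℝ) : ℂ) ^ 2 *
              Complex.exp (Complex.I * ((a k s : ℝ) : ℂ)) * S0 k) +
            ((G k * ‖Shat k‖ ^ 2 : ℝ) : ℂ) *
              (S0 k * (starRingEnd ℂ) (DS k))).re := by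
          refine Finset.sum_congr rfl fun k _ => ?_
          rw [Complex.add_re]
          congr 1
          · rw [Complex.re_sum]
            refine Finset.sum_congr rfl fun s _ => ?_
            rw [← hsumℓ k s, Complex.re_sum]
            exact Finset.sum_congr rfl fun ℓ _ => (Complex.re_ofReal_mul _ _).symm
          · rw [Complex.re_ofReal_mul]
            congr 1
            rw [Complex.mul_re, Complex.conj_re, Complex.conj_im]
            ring
      _ = 0 := Finset.sum_eq_zero fun k _ => by rw [hzero k, Complex.zero_re]
  obtain ⟨C, hC, hCb⟩ := quad_bound g hsmooth hderiv
  refine ⟨C, hC, fun Δt ht ht1 => ?_⟩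
  rw [hEq Δt, hbase]
  exact hCb Δt ht ht1
end

section
/- For every radius a > 0 and every nonzero k ∈ ℝ², the Fourier transform of the indicator function of the disk of radius a satisfies ∫_{x ∈ ℝ², ‖x‖ < a} exp(−i⟨k,x⟩) dx = 2π a · J₁(a‖k‖)/‖k‖, where J₁ is the Bessel function of the first kind of order 1. -/
open scoped InnerProductSpace Real
open MeasureTheory

section DiskFourierAux

open intervalIntegral

noncomputable def Hb (z : ℝ) : ℝ := ∫ θ in (0:ℝ)..π, Real.cos (θ - z * Real.sin θ)

-- Lemma A: key theta identity
lemma lemA (z : ℝ) :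
    (∫ θ in (0:ℝ)..π, (Real.cos (θ - z * Real.sin θ)
        + z * Real.sin θ * Real.sin (θ - z * Real.sin θ)))
      = z * ∫ θ in (0:ℝ)..π, Real.cos (z * Real.sin θ) := by
  have hderiv : ∀ θ ∈ Set.uIcc (0:ℝ) π, HasDerivAt (fun t => Real.sin (t - z * Real.sin t))
      ((1 - z * Real.cos θ) * Real.cos (θ - z * Real.sin θ)) θ := by
    intro θ _
    have h1 : HasDerivAt (fun t : ℝ => t - z * Real.sin t) (1 - z * Real.cos θ) θ :=
      (hasDerivAt_id θ).sub ((Real.hasDerivAt_sin θ).const_mul z)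
    have h2 := (Real.hasDerivAt_sin (θ - z * Real.sin θ)).comp θ h1
    exact h2.congr_deriv (by ring)
  have hint : IntervalIntegrable (fun θ => (1 - z * Real.cos θ) * Real.cos (θ - z * Real.sin θ))
      volume 0 π := by
    apply Continuous.intervalIntegrable; continuity
  have hftc := intervalIntegral.integral_eq_sub_of_hasDerivAt hderiv hint
  simp only [Real.sin_zero, mul_zero, sub_zero, Real.sin_pi, Real.sin_zero] at hftc
  -- hftc : ∫ (1 - z cos θ) cos(θ - z sin θ) = 0
  have key : ∀ θ : ℝ, Real.cos (θ - z * Real.sin θ) + z * Real.sin θ * Real.sin (θ - z * Real.sin θ)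
      = (1 - z * Real.cos θ) * Real.cos (θ - z * Real.sin θ) + z * Real.cos (z * Real.sin θ) := by
    intro θ
    have := Real.cos_sub θ (θ - z * Real.sin θ)
    have h2 : θ - (θ - z * Real.sin θ) = z * Real.sin θ := by ring
    rw [h2] at this
    rw [this]; ring
  rw [intervalIntegral.integral_congr (fun θ _ => key θ)]
  rw [intervalIntegral.integral_add hint (by apply Continuous.intervalIntegrable; continuity)]
  rw [hftc, intervalIntegral.integral_const_mul]
  ring

-- Lemma B: ∫₀^π cos(z sinθ) = ∫₀^π cos(z cosθ)
lemma lemB (z : ℝ) :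
    (∫ θ in (0:ℝ)..π, Real.cos (z * Real.sin θ)) = ∫ θ in (0:ℝ)..π, Real.cos (z * Real.cos θ) := by
  have h1 : (∫ θ in (0:ℝ)..π, Real.cos (z * Real.cos θ))
      = ∫ u in (-(π/2))..(π/2), Real.cos (z * Real.sin u) := by
    have := intervalIntegral.integral_comp_add_right (a := -(π/2)) (b := π/2)
      (fun θ => Real.cos (z * Real.cos θ)) (π/2)
    rw [show -(π/2) + π/2 = (0:ℝ) by ring, show π/2 + π/2 = π by ring] at this
    rw [← this]
    apply intervalIntegral.integral_congr
    intro u _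
    simp only [Real.cos_add_pi_div_two, mul_neg, Real.cos_neg]
  have h2 : (∫ u in (-(π/2))..(0:ℝ), Real.cos (z * Real.sin u))
      = ∫ u in (0:ℝ)..(π/2), Real.cos (z * Real.sin u) := by
    have := intervalIntegral.integral_comp_neg (a := (0:ℝ)) (b := π/2)
      (fun u => Real.cos (z * Real.sin u))
    simp only [Real.sin_neg, mul_neg, Real.cos_neg, neg_zero] at this
    rw [← this]
  have h3 : (∫ θ in (π/2:ℝ)..π, Real.cos (z * Real.sin θ))
      = ∫ θ in (0:ℝ)..(π/2), Real.cos (z * Real.sin θ) := by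
    have := intervalIntegral.integral_comp_sub_left (a := (0:ℝ)) (b := π/2)
      (fun θ => Real.cos (z * Real.sin θ)) π
    simp only [Real.sin_pi_sub, sub_zero] at this
    rw [show π - π/2 = π/2 by ring] at this
    exact this.symm
  have hi : ∀ s t : ℝ, IntervalIntegrable (fun θ => Real.cos (z * Real.sin θ)) volume s t :=
    fun s t => (by continuity : Continuous fun θ => Real.cos (z * Real.sin θ)).intervalIntegrable s t
  rw [h1, ← intervalIntegral.integral_add_adjacent_intervals (hi (-(π/2)) 0) (hi 0 (π/2)),
    ← intervalIntegral.integral_add_adjacent_intervals (hi 0 (π/2)) (hi (π/2) π), h2, h3]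

-- Lemma C: derivative of Hb
lemma lemC (z : ℝ) :
    HasDerivAt Hb (∫ θ in (0:ℝ)..π, Real.sin θ * Real.sin (θ - z * Real.sin θ)) z := by
  have key : HasDerivAt (fun x : ℝ => ∫ θ in (0:ℝ)..π, Real.cos (θ - x * Real.sin θ))
      (∫ θ in (0:ℝ)..π, Real.sin θ * Real.sin (θ - z * Real.sin θ)) z := by
    refine (intervalIntegral.hasDerivAt_integral_of_dominated_loc_of_deriv_le (μ := volume)
      (F := fun (x : ℝ) (θ : ℝ) => Real.cos (θ - x * Real.sin θ))
      (F' := fun (x : ℝ) (θ : ℝ) => Real.sin θ * Real.sin (θ - x * Real.sin θ))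
      (x₀ := z) (a := 0) (b := π) (bound := fun _ => 1) (s := Metric.ball z 1) (Metric.ball_mem_nhds z one_pos)
      ?_ ?_ ?_ ?_ ?_ ?_).2
    · filter_upwards with x
      exact ((by continuity : Continuous fun θ => Real.cos (θ - x * Real.sin θ))).aestronglyMeasurable
    · exact ((by continuity : Continuous fun θ => Real.cos (θ - z * Real.sin θ))).intervalIntegrable 0 π
    · exact ((by continuity : Continuous fun θ => Real.sin θ * Real.sin (θ - z * Real.sin θ))).aestronglyMeasurable
    · filter_upwards with θ _ x _
      calc ‖Real.sin θ * Real.sin (θ - x * Real.sin θ)‖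
          = |Real.sin θ| * |Real.sin (θ - x * Real.sin θ)| := by
            rw [Real.norm_eq_abs, abs_mul]
        _ ≤ 1 := by
            exact mul_le_one₀ (Real.abs_sin_le_one θ) (abs_nonneg _) (Real.abs_sin_le_one _)
    · exact intervalIntegrable_const
    · filter_upwards with θ _ x _
      have hu : HasDerivAt (fun x : ℝ => θ - x * Real.sin θ) (-Real.sin θ) x := by
        simpa using ((hasDerivAt_id x).mul_const (Real.sin θ)).const_sub θ
      have := (Real.hasDerivAt_cos (θ - x * Real.sin θ)).comp x hu
      exact this.congr_deriv (by ring)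
  exact key

-- Lemma D
lemma lemD (z : ℝ) :
    HasDerivAt (fun z => z * Hb z) (z * ∫ θ in (0:ℝ)..π, Real.cos (z * Real.cos θ)) z := by
  have h := (hasDerivAt_id z).mul (lemC z)
  rw [← lemB z, ← lemA z]
  have : Hb z + z * (∫ θ in (0:ℝ)..π, Real.sin θ * Real.sin (θ - z * Real.sin θ))
      = ∫ θ in (0:ℝ)..π, (Real.cos (θ - z * Real.sin θ)
        + z * Real.sin θ * Real.sin (θ - z * Real.sin θ)) := by
    rw [intervalIntegral.integral_add
      ((by continuity : Continuous fun θ => Real.cos (θ - z * Real.sin θ)).intervalIntegrable 0 π)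
      (by apply Continuous.intervalIntegrable; continuity)]
    unfold Hb
    rw [show (∫ θ in (0:ℝ)..π, z * Real.sin θ * Real.sin (θ - z * Real.sin θ))
      = z * ∫ θ in (0:ℝ)..π, Real.sin θ * Real.sin (θ - z * Real.sin θ) by
        rw [← intervalIntegral.integral_const_mul]; congr 1; ext θ; ring]
  rw [← this]
  exact h.congr_deriv (by simp)

lemma contW (c : ℝ) : Continuous fun r : ℝ => ∫ θ in (0:ℝ)..π, Real.cos (c * r * Real.cos θ) := by
  apply intervalIntegral.continuous_parametric_intervalIntegral_of_continuous'
  have : Continuous fun p : ℝ × ℝ => Real.cos (c * p.1 * Real.cos p.2) := by continuity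
  exact this

-- Lemma E: FTC over r
lemma lemE (c : ℝ) (hc : c ≠ 0) (a : ℝ) :
    (∫ r in (0:ℝ)..a, c * r * ∫ θ in (0:ℝ)..π, Real.cos (c * r * Real.cos θ))
      = a * Hb (c * a) := by
  have hderiv : ∀ r ∈ Set.uIcc (0:ℝ) a,
      HasDerivAt (fun r => ((c * r) * Hb (c * r)) / c)
        (c * r * ∫ θ in (0:ℝ)..π, Real.cos (c * r * Real.cos θ)) r := by
    intro r _
    have hc' : HasDerivAt (fun r : ℝ => c * r) c r := by
      simpa using (hasDerivAt_id r).const_mul c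
    have hg := (lemD (c * r)).comp r hc'
    have := hg.div_const c
    exact this.congr_deriv (by field_simp)
  have hint : IntervalIntegrable
      (fun r => c * r * ∫ θ in (0:ℝ)..π, Real.cos (c * r * Real.cos θ)) volume 0 a := by
    apply Continuous.intervalIntegrable
    exact (continuous_const.mul continuous_id).mul (contW c)
  have := intervalIntegral.integral_eq_sub_of_hasDerivAt hderiv hint
  rw [this, mul_zero]
  field_simp
  ring

lemma evenInt (f : ℝ → ℝ) : (∫ θ in (-π)..(0:ℝ), f (Real.cos θ)) = ∫ θ in (0:ℝ)..π, f (Real.cos θ) := by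
  have := intervalIntegral.integral_comp_neg (a := (0:ℝ)) (b := π) (fun θ => f (Real.cos θ))
  simp only [Real.cos_neg, neg_zero] at this
  exact this.symm

lemma reflInt (f : ℝ → ℝ) : (∫ θ in (0:ℝ)..π, f (Real.cos (π - θ))) = ∫ θ in (0:ℝ)..π, f (Real.cos θ) := by
  have := intervalIntegral.integral_comp_sub_left (a := (0:ℝ)) (b := π) (fun θ => f (Real.cos θ)) π
  simp only [sub_zero, sub_self] at this
  exact this

lemma lemSin (b : ℝ) : (∫ θ in (-π)..π, Real.sin (b * Real.cos θ)) = 0 := by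
  have hS : (∫ θ in (0:ℝ)..π, Real.sin (b * Real.cos θ)) = 0 := by
    have h := reflInt (fun u => Real.sin (b * u))
    simp only [Real.cos_pi_sub, mul_neg, Real.sin_neg] at h
    have h2 : (∫ θ in (0:ℝ)..π, -Real.sin (b * Real.cos θ))
        = -∫ θ in (0:ℝ)..π, Real.sin (b * Real.cos θ) := intervalIntegral.integral_neg
    rw [h2] at h
    linarith
  have hi : ∀ s t : ℝ, IntervalIntegrable (fun θ => Real.sin (b * Real.cos θ)) volume s t :=
    fun s t => (by continuity : Continuous fun θ => Real.sin (b * Real.cos θ)).intervalIntegrable s t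
  rw [← intervalIntegral.integral_add_adjacent_intervals (hi (-π) 0) (hi 0 π),
    evenInt (fun u => Real.sin (b * u)), hS]
  ring

lemma lemCos (b : ℝ) : (∫ θ in (-π)..π, Real.cos (b * Real.cos θ))
    = 2 * ∫ θ in (0:ℝ)..π, Real.cos (b * Real.cos θ) := by
  have hi : ∀ s t : ℝ, IntervalIntegrable (fun θ => Real.cos (b * Real.cos θ)) volume s t :=
    fun s t => (by continuity : Continuous fun θ => Real.cos (b * Real.cos θ)).intervalIntegrable s t
  rw [← intervalIntegral.integral_add_adjacent_intervals (hi (-π) 0) (hi 0 π),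
    evenInt (fun u => Real.cos (b * u))]
  ring

lemma lemExp (w : ℝ) : Complex.exp (-Complex.I * (w : ℂ))
    = ((Real.cos w : ℝ) : ℂ) - ((Real.sin w : ℝ) : ℂ) * Complex.I := by
  rw [show -Complex.I * (w : ℂ) = ((-w : ℝ) : ℂ) * Complex.I by push_cast; ring,
    Complex.exp_mul_I]
  push_cast
  rw [← Complex.ofReal_cos, ← Complex.ofReal_sin]
  push_cast
  simp [Real.cos_neg, Real.sin_neg]
  ring

lemma lemAngular (b : ℝ) : (∫ θ in (-π)..π, Complex.exp (-Complex.I * ((b * Real.cos θ : ℝ) : ℂ)))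
    = (((2 * ∫ θ in (0:ℝ)..π, Real.cos (b * Real.cos θ) : ℝ)) : ℂ) := by
  have h1 : ∀ θ : ℝ, Complex.exp (-Complex.I * ((b * Real.cos θ : ℝ) : ℂ))
      = ((Real.cos (b * Real.cos θ) : ℝ) : ℂ) - ((Real.sin (b * Real.cos θ) : ℝ) : ℂ) * Complex.I :=
    fun θ => lemExp _
  rw [intervalIntegral.integral_congr (fun θ _ => h1 θ)]
  rw [intervalIntegral.integral_sub]
  · rw [intervalIntegral.integral_mul_const, intervalIntegral.integral_ofReal,
      intervalIntegral.integral_ofReal, lemSin b, lemCos b]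
    push_cast
    ring
  · apply Continuous.intervalIntegrable
    exact Complex.continuous_ofReal.comp (by continuity)
  · apply Continuous.intervalIntegrable
    exact (Complex.continuous_ofReal.comp (by continuity)).mul continuous_const

lemma lemShift (b φ : ℝ) :
    (∫ θ in (-π)..π, Complex.exp (-Complex.I * ((b * Real.cos (θ - φ) : ℝ) : ℂ)))
      = ∫ θ in (-π)..π, Complex.exp (-Complex.I * ((b * Real.cos θ : ℝ) : ℂ)) := by
  set f : ℝ → ℂ := fun θ => Complex.exp (-Complex.I * ((b * Real.cos θ : ℝ) : ℂ)) with hf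
  have hper : Function.Periodic f (2 * π) := by
    intro θ; simp only [hf, Real.cos_add_two_pi]
  have h1 : (∫ θ in (-π)..π, f (θ - φ)) = ∫ θ in (-π - φ)..(π - φ), f θ :=
    intervalIntegral.integral_comp_sub_right f φ
  have h2 := hper.intervalIntegral_add_eq (-π - φ) (-π)
  rw [show -π - φ + 2 * π = π - φ by ring, show -π + 2 * π = π by ring] at h2
  rw [h1, h2]

end DiskFourierAux

/-- **Fourier transform of the indicator of a disk.**
For every radius `a > 0` and every nonzero `k ∈ ℝ²`,
`∫_{‖x‖ < a} exp(−i⟨k,x⟩) dx = 2π a J₁(a‖k‖)/‖k‖`. -/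
theorem disk_indicator_fourier
    (a : ℝ) (ha : 0 < a) (k : EuclideanSpace ℝ (Fin 2)) (hk : k ≠ 0) :
    ∫ x in Metric.ball (0 : EuclideanSpace ℝ (Fin 2)) a,
      Complex.exp (-Complex.I * (⟪k, x⟫_ℝ : ℂ)) =
    ((2 * π * a * besselJ1 (a * ‖k‖) / ‖k‖ : ℝ) : ℂ) := by
  have hc : 0 < ‖k‖ := norm_pos_iff.mpr hk
  set c : ℝ := ‖k‖ with hcdef
  -- decompose k in polar form
  set K : ℂ := (k 0 : ℂ) + (k 1 : ℂ) * Complex.I with hKdef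
  have hre : K.re = k 0 := by simp [hKdef]
  have him : K.im = k 1 := by simp [hKdef]
  have hnorm : ∀ x : EuclideanSpace ℝ (Fin 2), ‖x‖ = Real.sqrt (x 0 ^ 2 + x 1 ^ 2) := by
    intro x
    rw [EuclideanSpace.norm_eq]
    simp [Fin.sum_univ_two, Real.norm_eq_abs, sq_abs]
  have habs : ‖K‖ = c := by
    rw [hKdef, Complex.norm_add_mul_I, hcdef, hnorm]
  have hKne : K ≠ 0 := by
    intro h
    rw [h, norm_zero] at habs
    exact absurd habs.symm hc.ne'
  set φ : ℝ := Complex.arg K with hφdef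
  have hk0 : k 0 = c * Real.cos φ := by
    rw [hφdef, Complex.cos_arg hKne, habs, hre]
    field_simp
  have hk1 : k 1 = c * Real.sin φ := by
    rw [hφdef, Complex.sin_arg K, habs, him]
    field_simp
  -- step 1 : transport to ℝ × ℝ
  set S2 : Set (ℝ × ℝ) := {q : ℝ × ℝ | q.1 ^ 2 + q.2 ^ 2 < a ^ 2} with hS2def
  have hS2m : MeasurableSet S2 :=
    (isOpen_lt (((continuous_fst.pow 2).add (continuous_snd.pow 2)) : Continuous fun q : ℝ × ℝ => q.1 ^ 2 + q.2 ^ 2) continuous_const).measurableSet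
  set G : ℝ × ℝ → ℂ := Set.indicator S2
    (fun q => Complex.exp (-Complex.I * ((k 0 * q.1 + k 1 * q.2 : ℝ) : ℂ))) with hGdef
  set e : EuclideanSpace ℝ (Fin 2) ≃ᵐ ℝ × ℝ :=
    (MeasurableEquiv.toLp 2 (Fin 2 → ℝ)).symm.trans MeasurableEquiv.finTwoArrow with hedef
  have mp : MeasurePreserving e :=
    (volume_preserving_finTwoArrow ℝ).comp (EuclideanSpace.volume_preserving_symm_measurableEquiv_toLp (Fin 2))
  have he : ∀ x : EuclideanSpace ℝ (Fin 2), e x = (x 0, x 1) := by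
    intro x
    simp [hedef, MeasurableEquiv.finTwoArrow]
  have step1 : (∫ x in Metric.ball (0 : EuclideanSpace ℝ (Fin 2)) a,
      Complex.exp (-Complex.I * (⟪k, x⟫_ℝ : ℂ))) = ∫ p : ℝ × ℝ, G p := by
    rw [← MeasureTheory.integral_indicator measurableSet_ball,
      ← mp.integral_comp e.measurableEmbedding G]
    congr 1
    ext x
    rw [he x]
    have hmem : (x 0, x 1) ∈ S2 ↔ x ∈ Metric.ball (0 : EuclideanSpace ℝ (Fin 2)) a := by
      rw [Metric.mem_ball, dist_zero_right, hnorm x, Real.sqrt_lt' ha]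
      exact Iff.rfl
    have hval : Complex.exp (-Complex.I * ((k 0 * x 0 + k 1 * x 1 : ℝ) : ℂ))
        = Complex.exp (-Complex.I * (⟪k, x⟫_ℝ : ℂ)) := by
      congr 2
      norm_cast
      simp [PiLp.inner_apply, Fin.sum_univ_two, RCLike.inner_apply]
      ring
    rw [hGdef]
    classical
    rw [Set.indicator_apply, Set.indicator_apply, if_congr hmem hval rfl]
  rw [step1, ← integral_comp_polarCoord_symm G]
  -- step 3 : restrict and simplify on the target
  set g2 : ℝ × ℝ → ℂ := fun p => p.1 •
    Complex.exp (-Complex.I * ((c * p.1 * Real.cos (p.2 - φ) : ℝ) : ℂ)) with hg2def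
  have hval2 : ∀ r θ : ℝ, k 0 * (r * Real.cos θ) + k 1 * (r * Real.sin θ)
      = c * r * Real.cos (θ - φ) := by
    intro r θ
    rw [hk0, hk1, Real.cos_sub]
    ring
  have step3 : (∫ p in polarCoord.target, p.1 • G (polarCoord.symm p))
      = ∫ p in Set.Ioo (0:ℝ) a ×ˢ Set.Ioo (-π) π, g2 p := by
    have hsub : Set.Ioo (0:ℝ) a ×ˢ Set.Ioo (-π) π ⊆ polarCoord.target := by
      rw [polarCoord_target]
      exact Set.prod_mono Set.Ioo_subset_Ioi_self subset_rfl
    have hcong : ∀ p ∈ polarCoord.target,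
        p.1 • G (polarCoord.symm p)
          = Set.indicator (Set.Ioo (0:ℝ) a ×ˢ Set.Ioo (-π) π) g2 p := by
      rintro ⟨r, θ⟩ hp
      rw [polarCoord_target] at hp
      obtain ⟨hr, hθ⟩ := hp
      simp only [Set.mem_Ioi] at hr
      have hsq : (r * Real.cos θ) ^ 2 + (r * Real.sin θ) ^ 2 = r ^ 2 := by
        have := Real.sin_sq_add_cos_sq θ
        ring_nf
        nlinarith [Real.sin_sq_add_cos_sq θ]
      have hsymm : polarCoord.symm (r, θ) = (r * Real.cos θ, r * Real.sin θ) :=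
        polarCoord_symm_apply _
      by_cases hra : r < a
      · have h1 : polarCoord.symm (r, θ) ∈ S2 := by
          rw [hsymm, hS2def, Set.mem_setOf_eq]
          simp only
          rw [hsq]
          exact pow_lt_pow_left₀ hra hr.le two_ne_zero
        have h2 : ((r, θ) : ℝ × ℝ) ∈ Set.Ioo (0:ℝ) a ×ˢ Set.Ioo (-π) π :=
          ⟨⟨hr, hra⟩, hθ⟩
        rw [hGdef, Set.indicator_of_mem h1, Set.indicator_of_mem h2, hsymm, hg2def]
        simp only
        rw [hval2 r θ]
      · have h1 : polarCoord.symm (r, θ) ∉ S2 := by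
          rw [hsymm, hS2def, Set.mem_setOf_eq]
          simp only
          rw [hsq]
          push_neg
          exact pow_le_pow_left₀ ha.le (not_lt.mp hra) 2
        have h2 : ((r, θ) : ℝ × ℝ) ∉ Set.Ioo (0:ℝ) a ×ˢ Set.Ioo (-π) π := by
          intro h
          exact hra h.1.2
        rw [hGdef, Set.indicator_of_notMem h1, Set.indicator_of_notMem h2, smul_zero]
    rw [setIntegral_congr_fun polarCoord.open_target.measurableSet hcong,
      setIntegral_indicator (measurableSet_Ioo.prod measurableSet_Ioo),
      Set.inter_eq_self_of_subset_right hsub]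
  rw [step3]
  -- step 4 : integrability and Fubini
  have hg2c : Continuous g2 := by
    apply Continuous.smul continuous_fst
    apply Complex.continuous_exp.comp
    apply Continuous.mul continuous_const
    exact Complex.continuous_ofReal.comp
      ((continuous_const.mul continuous_fst).mul
        (Real.continuous_cos.comp (continuous_snd.sub continuous_const)))
  have hint : IntegrableOn g2 (Set.Ioo (0:ℝ) a ×ˢ Set.Ioo (-π) π) := by
    apply (ContinuousOn.integrableOn_compact (isCompact_Icc.prod isCompact_Icc) hg2c.continuousOn).mono_set
    exact Set.prod_mono Set.Ioo_subset_Icc_self Set.Ioo_subset_Icc_self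
  rw [Measure.volume_eq_prod ℝ ℝ] at hint ⊢
  rw [setIntegral_prod g2 hint]
  -- step 5 : inner angular integral
  have hinner : ∀ r : ℝ, (∫ θ in Set.Ioo (-π) π, g2 (r, θ))
      = ((r * (2 * ∫ θ in (0:ℝ)..π, Real.cos (c * r * Real.cos θ)) : ℝ) : ℂ) := by
    intro r
    rw [← integral_Ioc_eq_integral_Ioo,
      ← intervalIntegral.integral_of_le (by linarith [Real.pi_pos] : -π ≤ π)]
    simp only [hg2def]
    rw [intervalIntegral.integral_smul, lemShift (c * r) φ, lemAngular (c * r)]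
    rw [Complex.real_smul]
    push_cast
    ring
  rw [setIntegral_congr_fun measurableSet_Ioo (fun r _ => hinner r),
    ← integral_Ioc_eq_integral_Ioo, ← intervalIntegral.integral_of_le ha.le,
    intervalIntegral.integral_ofReal]
  -- step 6 : radial integral
  have hradial : (∫ r in (0:ℝ)..a, r * (2 * ∫ θ in (0:ℝ)..π, Real.cos (c * r * Real.cos θ)))
      = (2 / c) * (a * Hb (c * a)) := by
    rw [← lemE c hc.ne' a, ← intervalIntegral.integral_const_mul]
    apply intervalIntegral.integral_congr
    intro r _
    field_simp
  rw [hradial]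
  norm_cast
  show (2 / c) * (a * Hb (c * a)) = 2 * π * a * besselJ1 (a * c) / c
  rw [besselJ1, show (∫ θ in (0:ℝ)..π, Real.cos (θ - a * c * Real.sin θ)) = Hb (a * c) from rfl,
    mul_comm a c]
  field_simp
end
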